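/- arXiv:2212.04471 — 11 statements merged into one kernel-verified Lean document; each statement's English description precedes it below -/
import Mathlib

section
/- Let d be a positive integer, ι a finite type, Q : ι → Matrix (Fin d) (Fin d) ℂ a Hermitian Hilbert–Schmidt-orthonormal family, and N : Matrix (Fin d) (Fin d) ℂ →ₗ[ℂ] Matrix (Fin d) (Fin d) ℂ a linear map. Let ε ≥ 0, let α β : ι → ℂ, and set ρ = ∑ i, α i • Q i and O = ∑ i, β i • Q i. Suppose r̂ : ι × ι → ℂ satisfies ‖r̂ (i, j) − Tr ((Q i) * N (Q j))‖ ≤ ε for all i, j. Then ‖(∑ i, ∑ j, α i * β j * r̂ (j, i)) − Tr (O * N ρ)‖ ≤ ε * (∑ i, ‖α i‖) * (∑ j, ‖β j‖). -/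
open Matrix BigOperators

/-- ε-accurate estimates of all transfer-matrix entries Tr[Qᵢ N(Qⱼ)] of a
linear map `N` yield an (ε·‖α‖₁·‖β‖₁)-accurate estimate of Tr[O N(ρ)]. -/
theorem ptm_entry_estimates_give_expectation_estimates_one_norm
    (d : ℕ) (hd : 0 < d) (ι : Type) [Fintype ι] [DecidableEq ι]
    (Q : ι → Matrix (Fin d) (Fin d) ℂ)
    (hQherm : ∀ i, (Q i).IsHermitian)
    (hQorth : ∀ i j, (Q i * Q j).trace = if i = j then 1 else 0)
    (N : Matrix (Fin d) (Fin d) ℂ →ₗ[ℂ] Matrix (Fin d) (Fin d) ℂ)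
    (ε : ℝ) (hε : 0 ≤ ε) (α β : ι → ℂ)
    (ρ O : Matrix (Fin d) (Fin d) ℂ)
    (hρ : ρ = ∑ i, α i • Q i) (hO : O = ∑ i, β i • Q i)
    (rhat : ι × ι → ℂ)
    (hrhat : ∀ i j, ‖rhat (i, j) - (Q i * N (Q j)).trace‖ ≤ ε) :
    ‖(∑ i, ∑ j, α i * β j * rhat (j, i)) - (O * N ρ).trace‖ ≤
      ε * (∑ i, ‖α i‖) * (∑ j, ‖β j‖) := by
  have htr : (O * N ρ).trace = ∑ i, ∑ j, α i * β j * (Q j * N (Q i)).trace := by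
    subst hρ hO
    rw [map_sum]
    simp only [LinearMap.map_smul, Finset.sum_mul, Finset.mul_sum, smul_mul_assoc,
      mul_smul_comm, trace_sum, trace_smul, smul_eq_mul, smul_smul]
    refine Finset.sum_congr rfl fun i _ => Finset.sum_congr rfl fun j _ => by ring
  rw [htr, ← Finset.sum_sub_distrib]
  calc ‖∑ i, (∑ j, α i * β j * rhat (j, i) - ∑ j, α i * β j * (Q j * N (Q i)).trace)‖
      ≤ ∑ i, ‖∑ j, α i * β j * rhat (j, i) - ∑ j, α i * β j * (Q j * N (Q i)).trace‖ :=
        norm_sum_le _ _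
    _ ≤ ∑ i, ‖α i‖ * (ε * ∑ j, ‖β j‖) := by
        apply Finset.sum_le_sum
        intro i _
        rw [← Finset.sum_sub_distrib]
        calc ‖∑ j, (α i * β j * rhat (j, i) - α i * β j * (Q j * N (Q i)).trace)‖
            ≤ ∑ j, ‖α i * β j * rhat (j, i) - α i * β j * (Q j * N (Q i)).trace‖ :=
              norm_sum_le _ _
          _ ≤ ∑ j, ‖α i‖ * (‖β j‖ * ε) := by
              apply Finset.sum_le_sum
              intro j _
              rw [← mul_sub, norm_mul, norm_mul, mul_assoc]
              gcongr
              exact hrhat j i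
          _ = ‖α i‖ * (ε * ∑ j, ‖β j‖) := by
              rw [← Finset.mul_sum, ← Finset.sum_mul]
              ring
    _ = ε * (∑ i, ‖α i‖) * (∑ j, ‖β j‖) := by
        rw [← Finset.sum_mul]
        ring
end

section
/- Let d be a positive integer, ι a finite type, Q : ι → Matrix (Fin d) (Fin d) ℂ a Hermitian Hilbert–Schmidt-orthonormal family with ‖Q i‖ ≤ q (operator norm) for all i, and N : Matrix (Fin d) (Fin d) ℂ →ₗ[ℂ] Matrix (Fin d) (Fin d) ℂ a linear map. Let ε ≥ 0, let α β : ι → ℂ with the support {i | α i ≠ 0} of cardinality at most s_ρ and the support {i | β i ≠ 0} of cardinality at most s_O, and set ρ = ∑ i, α i • Q i and O = ∑ i, β i • Q i. Assume ρ is positive semidefinite with Tr ρ = 1 and O is Hermitian. Suppose r̂ : ι × ι → ℂ satisfies ‖r̂ (i, j) − Tr ((Q i) * N (Q j))‖ ≤ ε for all i, j. Then ‖(∑ i, ∑ j, α i * β j * r̂ (j, i)) − Tr (O * N ρ)‖ ≤ ε * s_ρ * Real.sqrt s_O * ‖O‖₂ * q. -/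
open Matrix BigOperators ComplexOrder

/-- The ℓ²→ℓ² operator norm of a complex matrix. -/
noncomputable def opNorm {m : Type*} [Fintype m] [DecidableEq m]
    (X : Matrix m m ℂ) : ℝ :=
  ‖Matrix.toEuclideanCLM (𝕜 := ℂ) X‖

/-- The Frobenius (Hilbert–Schmidt) norm √Tr(Xᴴ X) of a complex matrix. -/
noncomputable def frobNorm {m : Type*} [Fintype m] (X : Matrix m m ℂ) : ℝ :=
  Real.sqrt ((Xᴴ * X).trace.re)

lemma trace_mul_psd_le_opNorm {d : ℕ} (A ρ : Matrix (Fin d) (Fin d) ℂ)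
    (hρ : ρ.PosSemidef) (htr : ρ.trace = 1) :
    ‖(A * ρ).trace‖ ≤ opNorm A := by
  obtain ⟨B, rfl⟩ : ∃ B : Matrix (Fin d) (Fin d) ℂ, ρ = Bᴴ * B := by
    open scoped MatrixOrder in
    exact CStarAlgebra.nonneg_iff_eq_star_mul_self.mp hρ.nonneg
  set T := Matrix.toEuclideanCLM (𝕜 := ℂ) A with hT
  set v : Fin d → EuclideanSpace ℂ (Fin d) := fun k => (WithLp.equiv 2 _).symm (star (B k)) with hv
  have hdiag : ∀ k, (B * A * Bᴴ) k k = inner ℂ (v k) (T (v k)) := by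
    intro k
    rw [hv]
    simp only [hT, WithLp.equiv_symm_apply, Matrix.toEuclideanCLM_toLp, EuclideanSpace.inner_toLp_toLp,
      star_star, Matrix.toLin'_apply]
    simp only [Matrix.mul_apply, dotProduct, Matrix.mulVec, Matrix.conjTranspose_apply,
      Pi.star_apply, Finset.sum_mul, Finset.mul_sum]
    rw [Finset.sum_comm]
    refine Finset.sum_congr rfl fun p _ => Finset.sum_congr rfl fun q _ => by ring
  have hnorm : ∀ k, ‖v k‖ ^ 2 = ∑ p, ‖B k p‖ ^ 2 := by
    intro k
    rw [hv]
    rw [EuclideanSpace.norm_eq, Real.sq_sqrt (by positivity)]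
    simp
  have htr2 : ∑ k, ‖v k‖ ^ 2 = 1 := by
    have : (Bᴴ * B).trace = ((∑ k, ‖v k‖ ^ 2 : ℝ) : ℂ) := by
      simp only [Matrix.trace, Matrix.diag, Matrix.mul_apply, Matrix.conjTranspose_apply]
      rw [Finset.sum_comm]
      push_cast
      refine Finset.sum_congr rfl fun k _ => ?_
      have h2 : ((‖v k‖ : ℂ)) ^ 2 = ((∑ p, ‖B k p‖ ^ 2 : ℝ) : ℂ) := by
        rw [← hnorm k]; push_cast; ring
      rw [h2]
      push_cast
      refine Finset.sum_congr rfl fun p _ => ?_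
      simp [RCLike.star_def, RCLike.conj_mul]
    rw [htr] at this
    exact_mod_cast this.symm
  have h1 : (A * (Bᴴ * B)).trace = (B * A * Bᴴ).trace := by
    rw [← Matrix.mul_assoc, Matrix.trace_mul_cycle]
  rw [h1]
  calc ‖(B * A * Bᴴ).trace‖ = ‖∑ k, (B * A * Bᴴ) k k‖ := rfl
    _ ≤ ∑ k, ‖(B * A * Bᴴ) k k‖ := norm_sum_le _ _
    _ ≤ ∑ k, ‖T‖ * ‖v k‖ ^ 2 := by
        refine Finset.sum_le_sum fun k _ => ?_
        rw [hdiag k]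
        calc ‖(inner ℂ (v k) (T (v k)) : ℂ)‖ ≤ ‖v k‖ * ‖T (v k)‖ := norm_inner_le_norm _ _
          _ ≤ ‖v k‖ * (‖T‖ * ‖v k‖) := by
              exact mul_le_mul_of_nonneg_left (T.le_opNorm _) (norm_nonneg _)
          _ = ‖T‖ * ‖v k‖ ^ 2 := by ring
    _ = ‖T‖ * ∑ k, ‖v k‖ ^ 2 := by rw [← Finset.mul_sum]
    _ = opNorm A := by rw [htr2, mul_one]; rfl

set_option maxHeartbeats 800000 in
/-- under sparsity of the state's and observable's expansions, ε-accurate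
transfer-matrix entry estimates give an (ε·s_ρ·√s_O·‖O‖₂·q)-accurate expectation-value
estimate. -/
theorem tm_estimates_give_sparse_expectation_estimates
    (d : ℕ) (hd : 0 < d) (ι : Type) [Fintype ι] [DecidableEq ι]
    (Q : ι → Matrix (Fin d) (Fin d) ℂ) (q : ℝ)
    (hQherm : ∀ i, (Q i).IsHermitian)
    (hQorth : ∀ i j, (Q i * Q j).trace = if i = j then 1 else 0)
    (hQnorm : ∀ i, opNorm (Q i) ≤ q)
    (N : Matrix (Fin d) (Fin d) ℂ →ₗ[ℂ] Matrix (Fin d) (Fin d) ℂ)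
    (ε : ℝ) (hε : 0 ≤ ε) (α β : ι → ℂ) (sρ sO : ℕ)
    (hα : {i | α i ≠ 0}.ncard ≤ sρ) (hβ : {i | β i ≠ 0}.ncard ≤ sO)
    (ρ O : Matrix (Fin d) (Fin d) ℂ)
    (hρ : ρ = ∑ i, α i • Q i) (hO : O = ∑ i, β i • Q i)
    (hρpsd : ρ.PosSemidef) (hρtr : ρ.trace = 1) (hOherm : O.IsHermitian)
    (rhat : ι × ι → ℂ)
    (hrhat : ∀ i j, ‖rhat (i, j) - (Q i * N (Q j)).trace‖ ≤ ε) :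
    ‖(∑ i, ∑ j, α i * β j * rhat (j, i)) - (O * N ρ).trace‖ ≤
      ε * sρ * Real.sqrt sO * frobNorm O * q := by
  classical
  -- ι is nonempty
  have hne : Nonempty ι := by
    by_contra h
    rw [not_nonempty_iff] at h
    rw [hρ] at hρtr
    simp [Finset.univ_eq_empty] at hρtr
  obtain ⟨i₀⟩ := hne
  have hq : 0 ≤ q := le_trans (norm_nonneg _) (hQnorm i₀)
  -- coefficients of ρ are bounded by q
  have hαq : ∀ i, ‖α i‖ ≤ q := by
    intro i
    have hcoef : α i = (Q i * ρ).trace := by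
      rw [hρ, Matrix.mul_sum]
      simp only [Matrix.mul_smul, Matrix.trace_sum, Matrix.trace_smul, hQorth, smul_eq_mul]
      simp
    rw [hcoef]
    exact le_trans (trace_mul_psd_le_opNorm _ _ hρpsd hρtr) (hQnorm i)
  -- Frobenius norm of O
  have hfrob : frobNorm O = Real.sqrt (∑ j, ‖β j‖ ^ 2) := by
    have hOH : Oᴴ = ∑ i, (starRingEnd ℂ) (β i) • Q i := by
      rw [hO, Matrix.conjTranspose_sum]
      refine Finset.sum_congr rfl fun i _ => ?_
      rw [Matrix.conjTranspose_smul, (hQherm i).eq]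
      rfl
    have : (Oᴴ * O).trace = ((∑ j, ‖β j‖ ^ 2 : ℝ) : ℂ) := by
      rw [hOH, hO, Finset.sum_mul_sum]
      simp only [Matrix.smul_mul, Matrix.mul_smul, smul_smul, Matrix.trace_sum,
        Matrix.trace_smul, hQorth, smul_eq_mul]
      push_cast
      rw [Finset.sum_congr rfl fun i (_ : i ∈ Finset.univ) => Finset.sum_eq_single i
        (fun j _ hji => by simp [hji.symm]) (by simp)]
      refine Finset.sum_congr rfl fun i _ => ?_
      rw [if_pos rfl, mul_one, mul_comm, RCLike.conj_mul]; norm_cast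
    show Real.sqrt ((Oᴴ * O).trace.re) = _
    rw [this, Complex.ofReal_re]
  -- support finsets
  set sA : Finset ι := Finset.univ.filter (fun i => α i ≠ 0) with hsA
  set sB : Finset ι := Finset.univ.filter (fun i => β i ≠ 0) with hsB
  have hcardA : (sA.card : ℝ) ≤ sρ := by
    have : {i | α i ≠ 0} = (sA : Set ι) := by ext i; simp [hsA]
    rw [this, Set.ncard_coe_finset] at hα
    exact_mod_cast hα
  have hcardB : (sB.card : ℝ) ≤ sO := by
    have : {i | β i ≠ 0} = (sB : Set ι) := by ext i; simp [hsB]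
    rw [this, Set.ncard_coe_finset] at hβ
    exact_mod_cast hβ
  -- sum of |α| over support
  have hsumA : ∑ i ∈ sA, ‖α i‖ ≤ (sρ : ℝ) * q := by
    calc ∑ i ∈ sA, ‖α i‖ ≤ ∑ _i ∈ sA, q := Finset.sum_le_sum fun i _ => hαq i
      _ = sA.card * q := by rw [Finset.sum_const, nsmul_eq_mul]
      _ ≤ (sρ : ℝ) * q := mul_le_mul_of_nonneg_right hcardA hq
  -- Cauchy–Schwarz for β
  have hsumB : ∑ j ∈ sB, ‖β j‖ ≤ Real.sqrt sO * frobNorm O := by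
    have h1 : (∑ j ∈ sB, ‖β j‖) ^ 2 ≤ (sB.card : ℝ) * ∑ j ∈ sB, ‖β j‖ ^ 2 :=
      sq_sum_le_card_mul_sum_sq
    have h2 : ∑ j ∈ sB, ‖β j‖ ^ 2 ≤ ∑ j, ‖β j‖ ^ 2 :=
      Finset.sum_le_sum_of_subset_of_nonneg (Finset.subset_univ _) (fun _ _ _ => by positivity)
    have h3 : (∑ j ∈ sB, ‖β j‖) ^ 2 ≤ (sO : ℝ) * ∑ j, ‖β j‖ ^ 2 := by
      refine le_trans h1 (mul_le_mul hcardB h2 (by positivity) (by positivity))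
    calc ∑ j ∈ sB, ‖β j‖ = Real.sqrt ((∑ j ∈ sB, ‖β j‖) ^ 2) := by
          rw [Real.sqrt_sq (by positivity)]
      _ ≤ Real.sqrt ((sO : ℝ) * ∑ j, ‖β j‖ ^ 2) := Real.sqrt_le_sqrt h3
      _ = Real.sqrt sO * frobNorm O := by rw [Real.sqrt_mul (by positivity), hfrob]
  -- trace identity
  have hNρ : N ρ = ∑ i, α i • N (Q i) := by
    rw [hρ, map_sum]
    exact Finset.sum_congr rfl fun i _ => map_smul N _ _
  have htr : (O * N ρ).trace = ∑ i, ∑ j, α i * β j * (Q j * N (Q i)).trace := by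
    rw [hO, hNρ, Finset.sum_mul_sum]
    simp only [Matrix.smul_mul, Matrix.mul_smul, smul_smul, Matrix.trace_sum,
      Matrix.trace_smul, smul_eq_mul]
    rw [Finset.sum_comm]
  -- the difference as a double sum
  have hdiff : (∑ i, ∑ j, α i * β j * rhat (j, i)) - (O * N ρ).trace =
      ∑ i, ∑ j, α i * β j * (rhat (j, i) - (Q j * N (Q i)).trace) := by
    rw [htr, ← Finset.sum_sub_distrib]
    refine Finset.sum_congr rfl fun i _ => ?_
    rw [← Finset.sum_sub_distrib]
    exact Finset.sum_congr rfl fun j _ => by ring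
  -- restrict to supports
  have hres : (∑ i, ∑ j, α i * β j * (rhat (j, i) - (Q j * N (Q i)).trace)) =
      ∑ i ∈ sA, ∑ j ∈ sB, α i * β j * (rhat (j, i) - (Q j * N (Q i)).trace) := by
    rw [← Finset.sum_subset (Finset.subset_univ sA) (fun i _ hi => ?_)]
    · refine Finset.sum_congr rfl fun i _ => ?_
      rw [← Finset.sum_subset (Finset.subset_univ sB) (fun j _ hj => ?_)]
      have : β j = 0 := by by_contra h; exact hj (by simp [hsB, h])
      simp [this]
    · have : α i = 0 := by by_contra h; exact hi (by simp [hsA, h])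
      simp [this]
  rw [hdiff, hres]
  calc ‖∑ i ∈ sA, ∑ j ∈ sB, α i * β j * (rhat (j, i) - (Q j * N (Q i)).trace)‖
      ≤ ∑ i ∈ sA, ∑ j ∈ sB, ‖α i * β j * (rhat (j, i) - (Q j * N (Q i)).trace)‖ := by
        exact le_trans (norm_sum_le _ _) (Finset.sum_le_sum fun i _ => norm_sum_le _ _)
    _ ≤ ∑ i ∈ sA, ∑ j ∈ sB, ‖α i‖ * ‖β j‖ * ε := by
        refine Finset.sum_le_sum fun i _ => Finset.sum_le_sum fun j _ => ?_
        rw [norm_mul, norm_mul]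
        exact mul_le_mul_of_nonneg_left (hrhat j i) (by positivity)
    _ = (∑ i ∈ sA, ‖α i‖) * (∑ j ∈ sB, ‖β j‖) * ε := by
        rw [Finset.sum_mul, Finset.sum_mul]
        refine Finset.sum_congr rfl fun i _ => ?_
        rw [Finset.mul_sum, Finset.sum_mul]
    _ ≤ ((sρ : ℝ) * q) * (Real.sqrt sO * frobNorm O) * ε := by
        refine mul_le_mul_of_nonneg_right ?_ hε
        exact mul_le_mul hsumA hsumB (Finset.sum_nonneg fun _ _ => norm_nonneg _)
          (by positivity)
    _ = ε * sρ * Real.sqrt sO * frobNorm O * q := by ring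
end

section
/- Let d be a positive integer, ι a finite type, Q : ι → Matrix (Fin d) (Fin d) ℂ a Hermitian Hilbert–Schmidt-orthonormal family with ‖Q i‖ ≤ q (operator norm) for all i, and N : Matrix (Fin d) (Fin d) ℂ →ₗ[ℂ] Matrix (Fin d) (Fin d) ℂ a linear map whose transfer matrix is sparse: the set {(i, j) | Tr ((Q i) * N (Q j)) ≠ 0} has cardinality at most s_N. Let ε ≥ 0, let α β : ι → ℂ, set ρ = ∑ i, α i • Q i and O = ∑ i, β i • Q i, and assume ρ is positive semidefinite with Tr ρ = 1 and O is Hermitian. Suppose r̂ : ι × ι → ℂ satisfies ‖r̂ (i, j) − Tr ((Q i) * N (Q j))‖ ≤ ε for all (i, j), and r̂ (i, j) = 0 whenever Tr ((Q i) * N (Q j)) = 0. Then ‖(∑ i, ∑ j, α i * β j * r̂ (j, i)) − Tr (O * N ρ)‖ ≤ ε * s_N * ‖O‖₂ * q. -/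
open Matrix BigOperators ComplexOrder

lemma quad_bound {d : ℕ} (X : Matrix (Fin d) (Fin d) ℂ) (x : Fin d → ℂ) :
    ‖star x ⬝ᵥ X *ᵥ x‖ ≤ opNorm X * ∑ a, ‖x a‖ ^ 2 := by
  set v : EuclideanSpace ℂ (Fin d) := (WithLp.equiv 2 _).symm x with hv
  have h1 : star x ⬝ᵥ X *ᵥ x = inner ℂ v (Matrix.toEuclideanCLM (𝕜 := ℂ) X v) := by
    rw [hv, WithLp.equiv_symm_apply, Matrix.toEuclideanCLM_toLp]
    simp [PiLp.inner_apply, dotProduct, RCLike.inner_apply, WithLp.equiv_symm_apply, mul_comm]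
  have h2 : ‖v‖ ^ 2 = ∑ a, ‖x a‖ ^ 2 := by
    rw [EuclideanSpace.norm_eq, Real.sq_sqrt (by positivity)]
    rfl
  calc ‖star x ⬝ᵥ X *ᵥ x‖ = ‖(inner ℂ v (Matrix.toEuclideanCLM (𝕜 := ℂ) X v) : ℂ)‖ := by rw [h1]
    _ ≤ ‖v‖ * ‖Matrix.toEuclideanCLM (𝕜 := ℂ) X v‖ := norm_inner_le_norm _ _
    _ ≤ ‖v‖ * (opNorm X * ‖v‖) :=
        mul_le_mul_of_nonneg_left ((Matrix.toEuclideanCLM (𝕜 := ℂ) X).le_opNorm v) (norm_nonneg _)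
    _ = opNorm X * ‖v‖ ^ 2 := by ring
    _ = opNorm X * ∑ a, ‖x a‖ ^ 2 := by rw [h2]

lemma trace_conjT_mul {m : Type*} [Fintype m] (X Y : Matrix m m ℂ) :
    (Xᴴ * Y).trace = ∑ p : m × m, (starRingEnd ℂ) (X p.1 p.2) * Y p.1 p.2 := by
  rw [Matrix.trace, Fintype.sum_prod_type]
  simp [Matrix.diag, Matrix.mul_apply, Matrix.conjTranspose_apply]
  rw [Finset.sum_comm]

lemma frob_eq_norm {m : Type*} [Fintype m] (X : Matrix m m ℂ) :
    frobNorm X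
      = ‖((WithLp.equiv 2 _).symm (fun p : m × m => X p.1 p.2) : EuclideanSpace ℂ (m × m))‖ := by
  rw [frobNorm, EuclideanSpace.norm_eq, trace_conjT_mul]
  congr 1
  rw [Complex.re_sum]
  refine Finset.sum_congr rfl fun p _ => ?_
  rw [← Complex.normSq_eq_conj_mul_self, Complex.ofReal_re, WithLp.equiv_symm_apply, WithLp.ofLp_toLp,
    Complex.sq_norm]

lemma cauchy_schwarz_frob {m : Type*} [Fintype m] (X Y : Matrix m m ℂ) :
    ‖(Xᴴ * Y).trace‖ ≤ frobNorm X * frobNorm Y := by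
  set u : EuclideanSpace ℂ (m × m) := (WithLp.equiv 2 _).symm (fun p : m × m => X p.1 p.2)
  set w : EuclideanSpace ℂ (m × m) := (WithLp.equiv 2 _).symm (fun p : m × m => Y p.1 p.2)
  have h1 : (Xᴴ * Y).trace = inner ℂ u w := by
    rw [trace_conjT_mul]
    simp [PiLp.inner_apply, RCLike.inner_apply, u, w, WithLp.equiv_symm_apply, mul_comm]
  rw [h1, frob_eq_norm, frob_eq_norm]
  exact norm_inner_le_norm _ _

lemma trace_mul_psd_le {d : ℕ} (A ρ : Matrix (Fin d) (Fin d) ℂ) (hρ : ρ.PosSemidef) :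
    ‖(A * ρ).trace‖ ≤ opNorm A * ρ.trace.re := by
  obtain ⟨S, hSh, hSS⟩ : ∃ S : Matrix (Fin d) (Fin d) ℂ, Sᴴ = S ∧ S * S = ρ := by
    open scoped MatrixOrder in
    exact ⟨CFC.sqrt ρ, (CFC.sqrt_nonneg ρ).posSemidef.isHermitian,
      CFC.sqrt_mul_sqrt_self ρ hρ.nonneg⟩
  have hconj : ∀ a k, (starRingEnd ℂ) (S a k) = S k a := by
    intro a k
    conv_rhs => rw [← hSh, Matrix.conjTranspose_apply]
    rfl
  have key : (A * ρ).trace = ∑ k, star (fun a => S a k) ⬝ᵥ A *ᵥ (fun a => S a k) := by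
    have h1 : (A * ρ).trace = (S * A * S).trace := by
      rw [Matrix.trace_mul_cycle S A S, hSS, Matrix.trace_mul_comm]
    rw [h1, Matrix.trace]
    refine Finset.sum_congr rfl fun k _ => ?_
    simp only [Matrix.diag, Matrix.mul_apply, dotProduct, Matrix.mulVec, Pi.star_apply,
      Complex.star_def, hconj, Finset.sum_mul, Finset.mul_sum]
    rw [Finset.sum_comm]
    refine Finset.sum_congr rfl fun a _ => Finset.sum_congr rfl fun b _ => by ring
  have htr : ∑ k, ∑ a, ‖S a k‖ ^ 2 = ρ.trace.re := by
    rw [← hSS, Matrix.trace, Complex.re_sum]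
    refine Finset.sum_congr rfl fun k _ => ?_
    rw [Matrix.diag, Matrix.mul_apply, Complex.re_sum]
    refine Finset.sum_congr rfl fun a _ => ?_
    rw [← hconj a k, ← Complex.normSq_eq_conj_mul_self, Complex.ofReal_re,
      Complex.sq_norm]
  calc ‖(A * ρ).trace‖ ≤ ∑ k, ‖star (fun a => S a k) ⬝ᵥ A *ᵥ (fun a => S a k)‖ := by
        rw [key]; exact norm_sum_le _ _
    _ ≤ ∑ k, opNorm A * ∑ a, ‖S a k‖ ^ 2 :=
        Finset.sum_le_sum fun k _ => quad_bound A _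
    _ = opNorm A * ρ.trace.re := by rw [← Finset.mul_sum, htr]

/-- for a channel with an s_N-sparse transfer matrix, ε-accurate estimates of
the nonzero entries yield (ε·s_N·‖O‖₂·q)-accurate expectation-value estimates for
arbitrary states and observables. -/
theorem tm_estimates_give_sparse_channel_expectation_estimates
    (d : ℕ) (hd : 0 < d) (ι : Type) [Fintype ι] [DecidableEq ι]
    (Q : ι → Matrix (Fin d) (Fin d) ℂ) (q : ℝ)
    (hQherm : ∀ i, (Q i).IsHermitian)
    (hQorth : ∀ i j, (Q i * Q j).trace = if i = j then 1 else 0)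
    (hQnorm : ∀ i, opNorm (Q i) ≤ q)
    (N : Matrix (Fin d) (Fin d) ℂ →ₗ[ℂ] Matrix (Fin d) (Fin d) ℂ)
    (sN : ℕ)
    (hsparse : {p : ι × ι | (Q p.1 * N (Q p.2)).trace ≠ 0}.ncard ≤ sN)
    (ε : ℝ) (hε : 0 ≤ ε) (α β : ι → ℂ)
    (ρ O : Matrix (Fin d) (Fin d) ℂ)
    (hρ : ρ = ∑ i, α i • Q i) (hO : O = ∑ i, β i • Q i)
    (hρpsd : ρ.PosSemidef) (hρtr : ρ.trace = 1) (hOherm : O.IsHermitian)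
    (rhat : ι × ι → ℂ)
    (hrhat : ∀ i j, ‖rhat (i, j) - (Q i * N (Q j)).trace‖ ≤ ε)
    (hrhat0 : ∀ i j, (Q i * N (Q j)).trace = 0 → rhat (i, j) = 0) :
    ‖(∑ i, ∑ j, α i * β j * rhat (j, i)) - (O * N ρ).trace‖ ≤
      ε * sN * frobNorm O * q := by
  classical
  set T : ι × ι → ℂ := fun p => (Q p.1 * N (Q p.2)).trace with hT
  -- ι is nonempty
  have hιne : Nonempty ι := by
    by_contra h
    rw [not_nonempty_iff] at h
    rw [hρ, Finset.univ_eq_empty, Finset.sum_empty] at hρtr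
    simp at hρtr
  have hq : 0 ≤ q := le_trans (norm_nonneg _) (hQnorm (Classical.arbitrary ι))
  have hfrob : 0 ≤ frobNorm O := Real.sqrt_nonneg _
  -- β characterization and bound
  have hβ : ∀ j, β j = (Q j * O).trace := by
    intro j
    rw [hO, Finset.mul_sum]
    simp [Matrix.mul_smul, Matrix.trace_smul, hQorth]
  have hfrobQ : ∀ j, frobNorm (Q j) = 1 := by
    intro j
    rw [frobNorm, (hQherm j), hQorth j j, if_pos rfl]
    simp
  have hβbound : ∀ j, ‖β j‖ ≤ frobNorm O := by
    intro j
    rw [hβ j]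
    calc ‖(Q j * O).trace‖ = ‖((Q j)ᴴ * O).trace‖ := by rw [hQherm j]
      _ ≤ frobNorm (Q j) * frobNorm O := cauchy_schwarz_frob _ _
      _ = frobNorm O := by rw [hfrobQ j, one_mul]
  -- α characterization and bound
  have hα : ∀ i, α i = (Q i * ρ).trace := by
    intro i
    rw [hρ, Finset.mul_sum]
    simp [Matrix.mul_smul, Matrix.trace_smul, hQorth]
  have hαbound : ∀ i, ‖α i‖ ≤ q := by
    intro i
    rw [hα i]
    calc ‖(Q i * ρ).trace‖ ≤ opNorm (Q i) * ρ.trace.re := trace_mul_psd_le _ _ hρpsd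
      _ = opNorm (Q i) := by rw [hρtr]; simp
      _ ≤ q := hQnorm i
  -- expansion of the trace
  have hexp : (O * N ρ).trace = ∑ p : ι × ι, α p.2 * β p.1 * T p := by
    rw [hO, hρ, map_sum, Finset.sum_mul_sum]
    simp only [_root_.map_smul, Matrix.smul_mul, Matrix.mul_smul, smul_smul]
    rw [Matrix.trace_sum, Fintype.sum_prod_type]
    refine Finset.sum_congr rfl fun j _ => ?_
    rw [Matrix.trace_sum]
    refine Finset.sum_congr rfl fun i _ => ?_
    rw [Matrix.trace_smul]
    simp only [hT, smul_eq_mul]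
  have hsum1 : (∑ i, ∑ j, α i * β j * rhat (j, i)) = ∑ p : ι × ι, α p.2 * β p.1 * rhat p := by
    rw [Fintype.sum_prod_type, Finset.sum_comm]
  rw [hsum1, hexp, ← Finset.sum_sub_distrib]
  set F : Finset (ι × ι) := Finset.univ.filter (fun p => T p ≠ 0) with hF
  have hcard : F.card ≤ sN := by
    have hset : {p : ι × ι | (Q p.1 * N (Q p.2)).trace ≠ 0} = ↑F := by
      ext p; simp [hF, hT]
    rw [hset, Set.ncard_coe_finset] at hsparse
    exact hsparse
  have hzero : ∀ p ∈ Finset.univ, p ∉ F →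
      α p.2 * β p.1 * rhat p - α p.2 * β p.1 * T p = 0 := by
    intro p _ hp
    have hTp : T p = 0 := by
      by_contra h
      exact hp (Finset.mem_filter.mpr ⟨Finset.mem_univ _, h⟩)
    have hrp : rhat p = 0 := by
      have := hrhat0 p.1 p.2 hTp
      rwa [Prod.mk.eta] at this
    rw [hTp, hrp]; ring
  rw [← Finset.sum_subset (Finset.subset_univ F) hzero]
  calc ‖∑ p ∈ F, (α p.2 * β p.1 * rhat p - α p.2 * β p.1 * T p)‖
      ≤ ∑ p ∈ F, ‖α p.2 * β p.1 * rhat p - α p.2 * β p.1 * T p‖ := norm_sum_le _ _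
    _ ≤ ∑ p ∈ F, q * frobNorm O * ε := by
        refine Finset.sum_le_sum fun p _ => ?_
        have h1 : α p.2 * β p.1 * rhat p - α p.2 * β p.1 * T p
            = α p.2 * β p.1 * (rhat p - T p) := by ring
        rw [h1, norm_mul, norm_mul]
        have h2 : ‖rhat p - T p‖ ≤ ε := by
          have := hrhat p.1 p.2
          rwa [Prod.mk.eta] at this
        have h3 : ‖α p.2‖ * ‖β p.1‖ ≤ q * frobNorm O :=
          mul_le_mul (hαbound _) (hβbound _) (norm_nonneg _) hq
        exact mul_le_mul h3 h2 (norm_nonneg _) (by positivity)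
    _ = F.card * (q * frobNorm O * ε) := by rw [Finset.sum_const, nsmul_eq_mul]
    _ ≤ sN * (q * frobNorm O * ε) := by
        apply mul_le_mul_of_nonneg_right _ (by positivity)
        exact_mod_cast hcard
    _ = ε * sN * frobNorm O * q := by ring
end

section
/- Let d be a positive integer, ι a finite type, Q : ι → Matrix (Fin d) (Fin d) ℂ a Hermitian Hilbert–Schmidt-orthonormal family with ‖Q i‖ ≤ q (operator norm) for all i, where q > 0. Let ρ = ∑ i, α i • Q i be positive semidefinite with Tr ρ = 1, where the support {i | α i ≠ 0} has cardinality at most s with s ≥ 1. Then the purity satisfies Tr (ρ * ρ) ≤ s * q² (as a real inequality, Tr(ρ*ρ) being real and nonnegative), and the rank of ρ satisfies s * q² * (rank ρ) ≥ 1. -/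
open Matrix BigOperators ComplexOrder

lemma psd_trace_nonneg {n : Type*} [Fintype n] [DecidableEq n] {A : Matrix n n ℂ}
    (hA : A.PosSemidef) : 0 ≤ A.trace := by
  rw [Matrix.trace]
  apply Finset.sum_nonneg
  intro i _
  have := hA.dotProduct_mulVec_nonneg (Pi.single i 1)
  simpa [Matrix.mulVec_single, Matrix.diag, dotProduct, Pi.single_apply] using this

lemma trace_mul_psd_nonneg {n : Type*} [Fintype n] [DecidableEq n] {A B : Matrix n n ℂ}
    (hA : A.PosSemidef) (hB : B.PosSemidef) : 0 ≤ (A * B).trace := by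
  obtain ⟨S, hSH, hSS⟩ : ∃ S : Matrix n n ℂ, Sᴴ = S ∧ S * S = A := by
    open scoped MatrixOrder in
    exact ⟨CFC.sqrt A, (CFC.sqrt_nonneg A).posSemidef.1, CFC.sqrt_mul_sqrt_self A hA.nonneg⟩
  have h1 : (A * B).trace = (S * B * Sᴴ).trace := by
    rw [hSH, ← hSS, mul_assoc, Matrix.trace_mul_comm]
  rw [h1]
  exact psd_trace_nonneg (hB.mul_mul_conjTranspose_same S)

lemma psd_smul_one_sub {m : Type*} [Fintype m] [DecidableEq m]
    {X : Matrix m m ℂ} {q : ℝ} (hX : X.IsHermitian) (hn : opNorm X ≤ q) :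
    (((q : ℂ) • 1 - X)).PosSemidef := by
  refine Matrix.PosSemidef.of_dotProduct_mulVec_nonneg ?_ ?_
  · apply Matrix.IsHermitian.sub _ hX
    simp [Matrix.IsHermitian, Matrix.conjTranspose_smul, Complex.star_def,
      Complex.conj_ofReal]
  · intro x
    set v : EuclideanSpace ℂ m := (WithLp.equiv 2 (m → ℂ)).symm x with hv
    set T := Matrix.toEuclideanCLM (𝕜 := ℂ) X with hT
    have hdot : dotProduct (star x) (X *ᵥ x) = inner ℂ v (T v) := by
      rw [EuclideanSpace.inner_eq_star_dotProduct, hT, dotProduct_comm]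
      rfl
    have hsa : IsSelfAdjoint T := by
      rw [hT, isSelfAdjoint_iff, ← map_star]
      exact congrArg _ hX
    have hsym := (ContinuousLinearMap.isSelfAdjoint_iff_isSymmetric.mp hsa)
    set c : ℂ := inner ℂ v (T v) with hc
    have him : c.im = 0 := by
      have h1 : (starRingEnd ℂ) c = c := by
        have h2 := hsym.conj_inner_sym v v
        rw [hc, ← inner_conj_symm v (T v)] at *
        simpa using h2.symm
      exact Complex.conj_eq_iff_im.mp h1
    have hre : c.re ≤ q * ‖v‖ ^ 2 := by
      calc c.re ≤ ‖c‖ := Complex.re_le_norm c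
        _ = ‖(inner ℂ v (T v) : ℂ)‖ := rfl
        _ ≤ ‖v‖ * ‖T v‖ := norm_inner_le_norm v (T v)
        _ ≤ ‖v‖ * (‖T‖ * ‖v‖) := by
            apply mul_le_mul_of_nonneg_left (T.le_opNorm v) (norm_nonneg v)
        _ ≤ ‖v‖ * (q * ‖v‖) := by
            apply mul_le_mul_of_nonneg_left _ (norm_nonneg v)
            exact mul_le_mul_of_nonneg_right hn (norm_nonneg v)
        _ = q * ‖v‖ ^ 2 := by ring
    have hxx : dotProduct (star x) x = inner ℂ v v := by
      rw [EuclideanSpace.inner_eq_star_dotProduct, dotProduct_comm]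
      rfl
    have hbre : (inner ℂ v v : ℂ).re = ‖v‖ ^ 2 := by
      have := inner_self_eq_norm_sq (𝕜 := ℂ) v; simpa using this
    have hbim : (inner ℂ v v : ℂ).im = 0 := by
      have := inner_self_im (𝕜 := ℂ) v; simpa using this
    have hexp : dotProduct (star x) ((((q : ℂ) • 1 - X)) *ᵥ x)
        = (q : ℂ) * (inner ℂ v v : ℂ) - c := by
      rw [Matrix.sub_mulVec, dotProduct_sub, Matrix.smul_mulVec,
        Matrix.one_mulVec, dotProduct_smul, hxx, hdot]
      simp [smul_eq_mul]
    rw [hexp, Complex.le_def]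
    constructor
    · simp only [Complex.zero_re, Complex.sub_re, Complex.mul_re, Complex.ofReal_re,
        Complex.ofReal_im, hbre, hbim]
      nlinarith [hre]
    · simp only [Complex.zero_im, Complex.sub_im, Complex.mul_im, Complex.ofReal_im,
        Complex.ofReal_re, hbim, him]
      ring

lemma herm_trace_eq {n : Type*} [Fintype n] [DecidableEq n] {A : Matrix n n ℂ}
    (hA : A.IsHermitian) : A.trace = ∑ k, (hA.eigenvalues k : ℂ) := by
  conv_lhs => rw [hA.spectral_theorem, Unitary.conjStarAlgAut_apply]
  rw [Matrix.trace_mul_cycle]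
  rw [show (star (hA.eigenvectorUnitary : Matrix n n ℂ)) * (hA.eigenvectorUnitary : Matrix n n ℂ) = 1
    from Unitary.coe_star_mul_self _]
  rw [one_mul, Matrix.trace_diagonal]
  rfl

lemma herm_trace_sq_eq {n : Type*} [Fintype n] [DecidableEq n] {A : Matrix n n ℂ}
    (hA : A.IsHermitian) : (A * A).trace = ∑ k, ((hA.eigenvalues k : ℂ)) ^ 2 := by
  have h1 : (star (hA.eigenvectorUnitary : Matrix n n ℂ)) * (hA.eigenvectorUnitary : Matrix n n ℂ) = 1 :=
    Unitary.coe_star_mul_self _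
  set U : Matrix n n ℂ := (hA.eigenvectorUnitary : Matrix n n ℂ)
  set D : Matrix n n ℂ := Matrix.diagonal (RCLike.ofReal ∘ hA.eigenvalues)
  have h2 : A * A = U * (D * D) * star U := by
    conv_lhs => rw [hA.spectral_theorem, Unitary.conjStarAlgAut_apply]
    simp only [Matrix.mul_assoc]
    rw [← Matrix.mul_assoc (star U) U, h1, one_mul]
  rw [h2, Matrix.trace_mul_cycle, ← Matrix.mul_assoc, h1, one_mul]
  rw [show D * D = Matrix.diagonal (fun k => ((hA.eigenvalues k : ℂ))^2) by
    rw [Matrix.diagonal_mul_diagonal]; funext k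
    simp only [Function.comp_apply, Pi.mul_apply, pow_two]; rfl]
  rw [Matrix.trace_diagonal]

/-- a state with an s-sparse expansion in a Hermitian Hilbert–Schmidt
orthonormal family with operator norms at most q has purity Tr(ρ²) ≤ s·q² and rank
satisfying s·q²·rank(ρ) ≥ 1. -/
theorem sparse_state_limited_purity_and_rank
    (d : ℕ) (hd : 0 < d) (ι : Type) [Fintype ι] [DecidableEq ι]
    (Q : ι → Matrix (Fin d) (Fin d) ℂ) (q : ℝ) (hq : 0 < q)
    (hQherm : ∀ i, (Q i).IsHermitian)
    (hQorth : ∀ i j, (Q i * Q j).trace = if i = j then 1 else 0)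
    (hQnorm : ∀ i, opNorm (Q i) ≤ q)
    (α : ι → ℂ) (s : ℕ) (hs : 1 ≤ s) (hα : {i | α i ≠ 0}.ncard ≤ s)
    (ρ : Matrix (Fin d) (Fin d) ℂ) (hρ : ρ = ∑ i, α i • Q i)
    (hρpsd : ρ.PosSemidef) (hρtr : ρ.trace = 1) :
    (ρ * ρ).trace.re ≤ (s : ℝ) * q ^ 2 ∧
      1 ≤ (s : ℝ) * q ^ 2 * (ρ.rank : ℝ) := by
  classical
  -- coefficients are traces against the family
  have hαtr : ∀ j, (ρ * Q j).trace = α j := by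
    intro j
    rw [hρ, Finset.sum_mul, Matrix.trace_sum]
    simp [Matrix.smul_mul, Matrix.trace_smul, hQorth, smul_eq_mul, mul_ite]
  -- each coefficient is real with |α j| ≤ q
  have key : ∀ j, (α j).im = 0 ∧ (α j).re ≤ q ∧ -q ≤ (α j).re := by
    intro j
    have h1 : (0:ℂ) ≤ (q:ℂ) - α j := by
      have hpsd := psd_smul_one_sub (hQherm j) (hQnorm j)
      have h := trace_mul_psd_nonneg hρpsd hpsd
      rwa [Matrix.mul_sub, Matrix.trace_sub, Matrix.mul_smul, Matrix.trace_smul, Matrix.mul_one,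
        hρtr, hαtr, smul_eq_mul, mul_one] at h
    have h2 : (0:ℂ) ≤ (q:ℂ) + α j := by
      have hherm : (-(Q j)).IsHermitian := (hQherm j).neg
      have hnorm : opNorm (-(Q j)) ≤ q := by
        unfold opNorm; rw [map_neg, norm_neg]; exact hQnorm j
      have hpsd := psd_smul_one_sub hherm hnorm
      have h := trace_mul_psd_nonneg hρpsd hpsd
      rwa [sub_neg_eq_add, Matrix.mul_add, Matrix.trace_add, Matrix.mul_smul, Matrix.trace_smul,
        Matrix.mul_one, hρtr, hαtr, smul_eq_mul, mul_one] at h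
    rw [Complex.le_def] at h1 h2
    simp only [Complex.zero_re, Complex.zero_im, Complex.sub_re, Complex.sub_im, Complex.add_re,
      Complex.add_im, Complex.ofReal_re, Complex.ofReal_im] at h1 h2
    refine ⟨by linarith [h1.2], by linarith [h1.1], by linarith [h2.1]⟩
  -- purity formula
  have hpur : (ρ * ρ).trace = ∑ i, (α i) ^ 2 := by
    nth_rewrite 2 [hρ]
    rw [Finset.mul_sum, Matrix.trace_sum]
    refine Finset.sum_congr rfl fun j _ => ?_
    rw [Matrix.mul_smul, Matrix.trace_smul, hαtr, smul_eq_mul, ← pow_two]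
  have hre : (ρ * ρ).trace.re = ∑ i, ((α i).re) ^ 2 := by
    rw [hpur, Complex.re_sum]
    refine Finset.sum_congr rfl fun i _ => ?_
    rw [pow_two, pow_two, Complex.mul_re, (key i).1]
    ring
  -- sparse support bound
  set t : Finset ι := Finset.univ.filter (fun i => α i ≠ 0) with ht
  have hts : (t.card : ℝ) ≤ (s : ℝ) := by
    have hcard : {i | α i ≠ 0}.ncard = t.card := by
      rw [Set.ncard_eq_toFinset_card']
      congr 1
      ext i
      simp [ht]
    rw [hcard] at hα
    exact_mod_cast hα
  have hsum1 : ∑ i, ((α i).re) ^ 2 = ∑ i ∈ t, ((α i).re) ^ 2 := by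
    symm
    apply Finset.sum_subset (Finset.subset_univ _)
    intro i _ hi
    have : α i = 0 := by simpa [ht] using hi
    simp [this]
  have hsum2 : ∑ i ∈ t, ((α i).re) ^ 2 ≤ (t.card : ℝ) * q ^ 2 := by
    have := Finset.sum_le_card_nsmul t (fun i => ((α i).re) ^ 2) (q ^ 2)
      (fun i _ => by
        have h1 := (key i).2.1
        have h2 := (key i).2.2
        show ((α i).re) ^ 2 ≤ q ^ 2
        nlinarith [mul_nonneg (by linarith : (0:ℝ) ≤ q - (α i).re)
          (by linarith : (0:ℝ) ≤ q + (α i).re)])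
    simpa [nsmul_eq_mul] using this
  have hpurity : (ρ * ρ).trace.re ≤ (s : ℝ) * q ^ 2 := by
    rw [hre, hsum1]
    calc ∑ i ∈ t, ((α i).re) ^ 2 ≤ (t.card : ℝ) * q ^ 2 := hsum2
      _ ≤ (s : ℝ) * q ^ 2 := by nlinarith [sq_nonneg q]
  refine ⟨hpurity, ?_⟩
  -- rank bound via eigenvalues
  have hH := hρpsd.1
  set μ := hH.eigenvalues with hμdef
  have htr : ∑ k, μ k = 1 := by
    have h := herm_trace_eq hH
    rw [hρtr] at h
    have : ((∑ k, μ k : ℝ) : ℂ) = 1 := by push_cast; exact h.symm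
    exact_mod_cast this
  have hP : (ρ * ρ).trace.re = ∑ k, (μ k) ^ 2 := by
    have h := herm_trace_sq_eq hH
    rw [h, Complex.re_sum]
    refine Finset.sum_congr rfl fun k _ => ?_
    rw [← Complex.ofReal_pow]
    exact Complex.ofReal_re _
  have hμ0 : ∀ k, 0 ≤ μ k := hρpsd.eigenvalues_nonneg
  set T : Finset (Fin d) := Finset.univ.filter (fun k => μ k ≠ 0) with hT
  have hrank : (ρ.rank : ℝ) = (T.card : ℝ) := by
    rw [hH.rank_eq_card_non_zero_eigs]
    norm_cast
    exact Fintype.card_subtype _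
  have hTsum : ∑ k ∈ T, μ k = 1 := by
    rw [hT, Finset.sum_filter_ne_zero]
    exact htr
  have hCS : (1 : ℝ) ≤ (T.card : ℝ) * ∑ k ∈ T, (μ k) ^ 2 := by
    have h := sq_sum_le_card_mul_sum_sq (s := T) (f := μ)
    rw [hTsum, one_pow] at h
    exact h
  have hle : ∑ k ∈ T, (μ k) ^ 2 ≤ (ρ * ρ).trace.re := by
    rw [hP]
    apply Finset.sum_le_sum_of_subset_of_nonneg (Finset.subset_univ _)
    intro k _ _
    exact sq_nonneg _
  have hTpos : (0 : ℝ) ≤ (T.card : ℝ) := Nat.cast_nonneg _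
  calc (1 : ℝ) ≤ (T.card : ℝ) * ∑ k ∈ T, (μ k) ^ 2 := hCS
    _ ≤ (T.card : ℝ) * ((s : ℝ) * q ^ 2) := by
        apply mul_le_mul_of_nonneg_left _ hTpos
        exact le_trans hle hpurity
    _ = (s : ℝ) * q ^ 2 * (ρ.rank : ℝ) := by rw [hrank]; ring
end

section
/- Let n be a positive integer and I = (Fin n → Fin 2). Let φ : I × I → ℂ be a unit vector (∑ x, ‖φ x‖² = 1) and let ρ_φ : Matrix (I × I) (I × I) ℂ, ρ_φ x y = φ x * conj (φ y), be the associated rank-one projection. Then ∑ over all pairs (A, B) with A B : Fin n → Fin 4 and B ≠ (fun _ => 0) of ‖⟪φ, ((P A) ⊗ₖ (P B)) φ⟫‖² equals 2^(2n) − 2^n * ‖ptr₂ ρ_φ‖₂², where ‖·‖₂ is the Frobenius norm. -/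
open Matrix BigOperators Kronecker

/-- The single-qubit Pauli matrices: σ₀ = 1, σ₁ = X, σ₂ = Y, σ₃ = Z. -/
noncomputable def pauli : Fin 4 → Matrix (Fin 2) (Fin 2) ℂ :=
  ![1, !![0, 1; 1, 0], !![0, -Complex.I; Complex.I, 0], !![1, 0; 0, -1]]

/-- The Pauli string associated to `A : ι → Fin 4`. -/
noncomputable def pauliString {ι : Type*} [Fintype ι] (A : ι → Fin 4) :
    Matrix (ι → Fin 2) (ι → Fin 2) ℂ :=
  Matrix.of fun x y => ∏ i, pauli (A i) (x i) (y i)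

/-- The quadratic form ⟪φ, M φ⟫ = ∑ x ∑ y, conj (φ x) · M x y · φ y. -/
noncomputable def qip {m : Type*} [Fintype m] (φ : m → ℂ) (M : Matrix m m ℂ) : ℂ :=
  ∑ x, ∑ y, (starRingEnd ℂ) (φ x) * M x y * φ y

/-- Partial trace over the second tensor factor. -/
noncomputable def ptr2 {s t : Type*} [Fintype t] (M : Matrix (s × t) (s × t) ℂ) :
    Matrix s s ℂ :=
  Matrix.of fun i j => ∑ k, M (i, k) (j, k)

/-! ### Auxiliary lemmas -/

lemma pauli_conj (a : Fin 4) (i j : Fin 2) :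
    (starRingEnd ℂ) (pauli a i j) = pauli a j i := by
  fin_cases a <;> fin_cases i <;> fin_cases j <;>
    simp [pauli, Matrix.one_apply]

lemma pauli_complete (i j k l : Fin 2) :
    ∑ a : Fin 4, pauli a i j * pauli a k l
      = if i = l ∧ j = k then 2 else 0 := by
  fin_cases i <;> fin_cases j <;> fin_cases k <;> fin_cases l <;>
    simp [pauli, Fin.sum_univ_four, Matrix.one_apply, Complex.ext_iff] <;> ring_nf

lemma pauliString_conj {ι : Type*} [Fintype ι] (A : ι → Fin 4) (x y : ι → Fin 2) :
    (starRingEnd ℂ) (pauliString A x y) = pauliString A y x := by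
  simp only [pauliString, Matrix.of_apply, map_prod, pauli_conj]

lemma pauliString_complete {ι : Type*} [Fintype ι] [DecidableEq ι] (x y z w : ι → Fin 2) :
    ∑ A : ι → Fin 4, pauliString A x y * pauliString A z w
      = if x = w ∧ y = z then (2 : ℂ) ^ Fintype.card ι else 0 := by
  have h1 : ∀ A : ι → Fin 4, pauliString A x y * pauliString A z w
      = ∏ i, (pauli (A i) (x i) (y i) * pauli (A i) (z i) (w i)) := by
    intro A
    simp [pauliString, Finset.prod_mul_distrib]
  simp only [h1]
  rw [← Fintype.piFinset_univ, ← Finset.prod_univ_sum (fun _ => (Finset.univ : Finset (Fin 4)))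
    (fun i a => pauli a (x i) (y i) * pauli a (z i) (w i))]
  simp only [pauli_complete]
  by_cases h : x = w ∧ y = z
  · rw [if_pos h]
    have : ∀ i, (if x i = w i ∧ y i = z i then (2:ℂ) else 0) = 2 := by
      intro i; rw [if_pos ⟨congrFun h.1 i, congrFun h.2 i⟩]
    simp [this]
  · rw [if_neg h]
    have : ∃ i, ¬ (x i = w i ∧ y i = z i) := by
      by_contra hc
      push_neg at hc
      exact h ⟨funext fun i => (hc i).1, funext fun i => (hc i).2⟩
    obtain ⟨i, hi⟩ := this
    exact Finset.prod_eq_zero (Finset.mem_univ i) (if_neg hi)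

lemma pauliString_zero {ι : Type*} [Fintype ι] [DecidableEq ι] :
    pauliString (fun _ : ι => (0 : Fin 4)) = 1 := by
  ext x y
  simp only [pauliString, Matrix.of_apply]
  show (∏ i, (1 : Matrix (Fin 2) (Fin 2) ℂ) (x i) (y i)) = _
  simp only [Matrix.one_apply]
  by_cases h : x = y
  · subst h; simp
  · rw [if_neg h]
    have : ∃ i, x i ≠ y i := by
      by_contra hc; push_neg at hc; exact h (funext hc)
    obtain ⟨i, hi⟩ := this
    exact Finset.prod_eq_zero (Finset.mem_univ i) (if_neg hi)

lemma sum_swap3 {α β γ M : Type*} [AddCommMonoid M] [Fintype α] [Fintype β] [Fintype γ]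
    (f : α → β → γ → M) :
    ∑ a : α, ∑ b : β, ∑ c : γ, f a b c = ∑ c : γ, ∑ a : α, ∑ b : β, f a b c := by
  have h : ∀ a : α, ∑ b : β, ∑ c : γ, f a b c = ∑ c : γ, ∑ b : β, f a b c :=
    fun a => Finset.sum_comm
  simp only [h]
  exact Finset.sum_comm

lemma sum_swap3' {α β γ M : Type*} [AddCommMonoid M] [Fintype α] [Fintype β] [Fintype γ]
    (f : α → β → γ → M) :
    ∑ a : α, ∑ b : β, ∑ c : γ, f a b c = ∑ b : β, ∑ c : γ, ∑ a : α, f a b c := by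
  rw [Finset.sum_comm]
  exact Finset.sum_congr rfl fun b _ => Finset.sum_comm

lemma qip_eq {m : Type*} [Fintype m] (φ : m → ℂ) (M : Matrix m m ℂ) :
    qip φ M = ∑ p : m × m, (starRingEnd ℂ) (φ p.1) * M p.1 p.2 * φ p.2 := by
  unfold qip
  exact (Fintype.sum_prod_type' _).symm

lemma sum_quad {m : Type*} [Fintype m] (φ : m → ℂ) (M : Matrix m m ℂ) :
    qip φ M * (starRingEnd ℂ) (qip φ M)
      = ∑ r : (m × m) × (m × m),
          ((starRingEnd ℂ) (φ r.1.1) * φ r.1.2 * φ r.2.1 * (starRingEnd ℂ) (φ r.2.2))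
            * (M r.1.1 r.1.2 * (starRingEnd ℂ) (M r.2.1 r.2.2)) := by
  rw [qip_eq, map_sum, Finset.sum_mul_sum]
  conv_rhs => rw [Fintype.sum_prod_type]
  refine Finset.sum_congr rfl fun p _ => Finset.sum_congr rfl fun q _ => ?_
  simp only [_root_.map_mul, Complex.conj_conj]
  ring

lemma key_all {n : ℕ} (x y z w : (Fin n → Fin 2) × (Fin n → Fin 2)) :
    ∑ A : Fin n → Fin 4, ∑ B : Fin n → Fin 4,
        (pauliString A ⊗ₖ pauliString B) x y
          * (starRingEnd ℂ) ((pauliString A ⊗ₖ pauliString B) z w)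
      = if z = x ∧ w = y then (2 : ℂ) ^ (2 * n) else 0 := by
  simp only [Matrix.kroneckerMap_apply, _root_.map_mul, pauliString_conj]
  have hAB : ∀ A B : Fin n → Fin 4,
      pauliString A x.1 y.1 * pauliString B x.2 y.2
        * (pauliString A w.1 z.1 * pauliString B w.2 z.2)
      = (pauliString A x.1 y.1 * pauliString A w.1 z.1)
        * (pauliString B x.2 y.2 * pauliString B w.2 z.2) := fun A B => by ring
  simp only [hAB]
  rw [← Finset.sum_mul_sum, pauliString_complete, pauliString_complete, Fintype.card_fin]
  by_cases h1 : z = x ∧ w = y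
  · rw [if_pos h1, if_pos ⟨h1.1.symm ▸ rfl, h1.2.symm ▸ rfl⟩,
      if_pos ⟨h1.1.symm ▸ rfl, h1.2.symm ▸ rfl⟩, ← pow_add, two_mul]
  · rw [if_neg h1]
    by_cases h2 : x.1 = z.1 ∧ y.1 = w.1
    · by_cases h3 : x.2 = z.2 ∧ y.2 = w.2
      · exact absurd ⟨(Prod.ext h2.1 h3.1).symm, (Prod.ext h2.2 h3.2).symm⟩ h1
      · rw [if_neg h3, mul_zero]
    · rw [if_neg h2, zero_mul]

lemma key_zero {n : ℕ} (x y z w : (Fin n → Fin 2) × (Fin n → Fin 2)) :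
    ∑ A : Fin n → Fin 4,
        (pauliString A ⊗ₖ (1 : Matrix (Fin n → Fin 2) (Fin n → Fin 2) ℂ)) x y
          * (starRingEnd ℂ) ((pauliString A ⊗ₖ 1) z w)
      = (if x.2 = y.2 then 1 else 0) * (if z.2 = w.2 then 1 else 0)
        * (if x.1 = z.1 ∧ y.1 = w.1 then (2 : ℂ) ^ n else 0) := by
  simp only [Matrix.kroneckerMap_apply, Matrix.one_apply, _root_.map_mul, pauliString_conj,
    apply_ite (starRingEnd ℂ), _root_.map_one, _root_.map_zero]
  have h : ∀ A : Fin n → Fin 4,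
      pauliString A x.1 y.1 * (if x.2 = y.2 then (1:ℂ) else 0)
        * (pauliString A w.1 z.1 * (if z.2 = w.2 then (1:ℂ) else 0))
      = (if x.2 = y.2 then (1:ℂ) else 0) * (if z.2 = w.2 then (1:ℂ) else 0)
        * (pauliString A x.1 y.1 * pauliString A w.1 z.1) := fun A => by ring
  simp only [h]
  rw [← Finset.mul_sum, pauliString_complete, Fintype.card_fin]

lemma sum_AB {n : ℕ} (φ : (Fin n → Fin 2) × (Fin n → Fin 2) → ℂ)
    (hφ1 : ∑ x, (starRingEnd ℂ) (φ x) * φ x = 1) :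
    ∑ A : Fin n → Fin 4, ∑ B : Fin n → Fin 4,
        qip φ (pauliString A ⊗ₖ pauliString B)
          * (starRingEnd ℂ) (qip φ (pauliString A ⊗ₖ pauliString B))
      = (2 : ℂ) ^ (2 * n) := by
  simp only [sum_quad]
  rw [sum_swap3]
  have hr : ∀ r : (((Fin n → Fin 2) × (Fin n → Fin 2)) × ((Fin n → Fin 2) × (Fin n → Fin 2)))
      × (((Fin n → Fin 2) × (Fin n → Fin 2)) × ((Fin n → Fin 2) × (Fin n → Fin 2))),
      ∑ A : Fin n → Fin 4, ∑ B : Fin n → Fin 4,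
        ((starRingEnd ℂ) (φ r.1.1) * φ r.1.2 * φ r.2.1 * (starRingEnd ℂ) (φ r.2.2))
          * ((pauliString A ⊗ₖ pauliString B) r.1.1 r.1.2
            * (starRingEnd ℂ) ((pauliString A ⊗ₖ pauliString B) r.2.1 r.2.2))
      = ((starRingEnd ℂ) (φ r.1.1) * φ r.1.2 * φ r.2.1 * (starRingEnd ℂ) (φ r.2.2))
          * (if r.2 = r.1 then (2 : ℂ) ^ (2 * n) else 0) := by
    intro r
    simp only [← Finset.mul_sum]
    rw [key_all]
    simp only [← Prod.ext_iff]
  simp only [hr]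
  rw [Fintype.sum_prod_type]
  simp only [mul_ite, mul_zero, Finset.sum_ite_eq', Finset.mem_univ, if_true]
  rw [Fintype.sum_prod_type]
  dsimp only
  have hc : ∀ p q : (Fin n → Fin 2) × (Fin n → Fin 2),
      (starRingEnd ℂ) (φ p) * φ q * φ p * (starRingEnd ℂ) (φ q) * (2:ℂ) ^ (2*n)
      = ((starRingEnd ℂ) (φ p) * φ p) * (((starRingEnd ℂ) (φ q) * φ q) * (2:ℂ) ^ (2*n)) :=
    fun p q => by ring
  simp only [hc, ← Finset.mul_sum, ← Finset.sum_mul, hφ1, one_mul]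

set_option maxHeartbeats 1600000 in
lemma sum_A0 {n : ℕ} (φ : (Fin n → Fin 2) × (Fin n → Fin 2) → ℂ) :
    ∑ A : Fin n → Fin 4,
        qip φ (pauliString A ⊗ₖ (1 : Matrix (Fin n → Fin 2) (Fin n → Fin 2) ℂ))
          * (starRingEnd ℂ) (qip φ (pauliString A ⊗ₖ 1))
      = (2 : ℂ) ^ n * ∑ i : Fin n → Fin 2, ∑ j : Fin n → Fin 2,
          (∑ k, φ (i, k) * (starRingEnd ℂ) (φ (j, k)))
            * (starRingEnd ℂ) (∑ k, φ (i, k) * (starRingEnd ℂ) (φ (j, k))) := by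
  simp only [sum_quad]
  rw [Finset.sum_comm]
  have hr : ∀ r : (((Fin n → Fin 2) × (Fin n → Fin 2)) × ((Fin n → Fin 2) × (Fin n → Fin 2)))
      × (((Fin n → Fin 2) × (Fin n → Fin 2)) × ((Fin n → Fin 2) × (Fin n → Fin 2))),
      ∑ A : Fin n → Fin 4,
        ((starRingEnd ℂ) (φ r.1.1) * φ r.1.2 * φ r.2.1 * (starRingEnd ℂ) (φ r.2.2))
          * ((pauliString A ⊗ₖ (1 : Matrix (Fin n → Fin 2) (Fin n → Fin 2) ℂ)) r.1.1 r.1.2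
            * (starRingEnd ℂ) ((pauliString A ⊗ₖ 1) r.2.1 r.2.2))
      = ((starRingEnd ℂ) (φ r.1.1) * φ r.1.2 * φ r.2.1 * (starRingEnd ℂ) (φ r.2.2))
          * ((if r.1.1.2 = r.1.2.2 then 1 else 0) * (if r.2.1.2 = r.2.2.2 then 1 else 0)
            * (if r.1.1.1 = r.2.1.1 ∧ r.1.2.1 = r.2.2.1 then (2 : ℂ) ^ n else 0)) := by
    intro r
    rw [← Finset.mul_sum, key_zero]
  have hand : ∀ (a b : Prop) [Decidable a] [Decidable b] (X : ℂ),
      (if a ∧ b then X else 0) = (if a then (1:ℂ) else 0) * (if b then X else 0) := by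
    intro a b _ _ X
    by_cases ha : a <;> by_cases hb : b <;> simp [ha, hb]
  simp only [hr, hand]
  simp only [Fintype.sum_prod_type]
  simp only [mul_ite, ite_mul, mul_zero, zero_mul, mul_one, one_mul,
    Finset.sum_ite_irrel, Finset.sum_ite_eq, Finset.sum_ite_eq', Finset.sum_const_zero,
    Finset.mem_univ, if_true]
  have hswap : ∀ x : Fin n → Fin 2,
      (∑ x_1 : Fin n → Fin 2, ∑ x_2 : Fin n → Fin 2, ∑ x_3 : Fin n → Fin 2,
          (starRingEnd ℂ) (φ (x, x_1)) * φ (x_2, x_1) * φ (x, x_3)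
            * (starRingEnd ℂ) (φ (x_2, x_3)) * 2 ^ n)
        = ∑ x_2 : Fin n → Fin 2, ∑ x_3 : Fin n → Fin 2, ∑ x_1 : Fin n → Fin 2,
          (starRingEnd ℂ) (φ (x, x_1)) * φ (x_2, x_1) * φ (x, x_3)
            * (starRingEnd ℂ) (φ (x_2, x_3)) * 2 ^ n :=
    fun x => sum_swap3' _
  simp only [hswap]
  rw [Finset.mul_sum]
  refine Finset.sum_congr rfl fun i _ => ?_
  rw [Finset.mul_sum]
  refine Finset.sum_congr rfl fun j _ => ?_
  rw [map_sum, Finset.sum_mul_sum, Finset.mul_sum]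
  refine Finset.sum_congr rfl fun k _ => ?_
  rw [Finset.mul_sum]
  refine Finset.sum_congr rfl fun k' _ => ?_
  simp only [_root_.map_mul, Complex.conj_conj]
  ring

/-- the second-moment computation
∑_{A, B ≠ 0} |⟪φ, (P A ⊗ P B) φ⟫|² = 2^{2n} − 2ⁿ ‖ptr₂ ρ_φ‖₂² for any unit vector φ. -/
theorem pauli_second_moment_choi
    (n : ℕ) (hn : 0 < n)
    (φ : (Fin n → Fin 2) × (Fin n → Fin 2) → ℂ)
    (hφ : ∑ x, ‖φ x‖ ^ 2 = 1)
    (ρφ : Matrix ((Fin n → Fin 2) × (Fin n → Fin 2))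
      ((Fin n → Fin 2) × (Fin n → Fin 2)) ℂ)
    (hρφ : ∀ x y, ρφ x y = φ x * (starRingEnd ℂ) (φ y)) :
    ∑ A : Fin n → Fin 4,
        ∑ B ∈ Finset.univ.filter (fun B : Fin n → Fin 4 => B ≠ fun _ => (0 : Fin 4)),
          ‖qip φ (pauliString A ⊗ₖ pauliString B)‖ ^ 2
      = (2 : ℝ) ^ (2 * n) - (2 : ℝ) ^ n * frobNorm (ptr2 ρφ) ^ 2 := by
  classical
  have hφ1 : ∑ x, (starRingEnd ℂ) (φ x) * φ x = 1 := by
    have h1 : ∀ x : (Fin n → Fin 2) × (Fin n → Fin 2),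
        (starRingEnd ℂ) (φ x) * φ x = ((‖φ x‖ ^ 2 : ℝ) : ℂ) := by
      intro x; rw [Complex.conj_mul']; push_cast; ring
    simp only [h1]
    rw [← Complex.ofReal_sum, hφ, Complex.ofReal_one]
  have hnorm : ∀ c : ℂ, ‖c‖ ^ 2 = (c * (starRingEnd ℂ) c).re := by
    intro c
    rw [Complex.mul_conj, Complex.ofReal_re, Complex.normSq_eq_norm_sq]
  set S : ℝ := ∑ i : Fin n → Fin 2, ∑ j : Fin n → Fin 2,
    Complex.normSq (∑ k, φ (i, k) * (starRingEnd ℂ) (φ (j, k))) with hS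
  have hSnonneg : 0 ≤ S := by
    refine Finset.sum_nonneg fun i _ => Finset.sum_nonneg fun j _ => Complex.normSq_nonneg _
  have hsplit : ∀ A : Fin n → Fin 4,
      ∑ B ∈ Finset.univ.filter (fun B : Fin n → Fin 4 => B ≠ fun _ => (0 : Fin 4)),
        (qip φ (pauliString A ⊗ₖ pauliString B)
          * (starRingEnd ℂ) (qip φ (pauliString A ⊗ₖ pauliString B)))
      = (∑ B : Fin n → Fin 4, qip φ (pauliString A ⊗ₖ pauliString B)
          * (starRingEnd ℂ) (qip φ (pauliString A ⊗ₖ pauliString B)))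
        - qip φ (pauliString A ⊗ₖ (1 : Matrix (Fin n → Fin 2) (Fin n → Fin 2) ℂ))
          * (starRingEnd ℂ) (qip φ (pauliString A ⊗ₖ 1)) := by
    intro A
    have h2 := Finset.sum_filter_add_sum_filter_not Finset.univ
      (fun B : Fin n → Fin 4 => B ≠ fun _ => (0 : Fin 4))
      (fun B => qip φ (pauliString A ⊗ₖ pauliString B)
        * (starRingEnd ℂ) (qip φ (pauliString A ⊗ₖ pauliString B)))
    have h3 : Finset.univ.filter (fun B : Fin n → Fin 4 => ¬ B ≠ fun _ => (0 : Fin 4))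
        = {fun _ => (0 : Fin 4)} := by
      ext B; simp
    rw [h3, Finset.sum_singleton, pauliString_zero] at h2
    linear_combination h2
  have hmain : (∑ A : Fin n → Fin 4, ∑ B ∈ Finset.univ.filter
        (fun B : Fin n → Fin 4 => B ≠ fun _ => (0 : Fin 4)),
        qip φ (pauliString A ⊗ₖ pauliString B)
          * (starRingEnd ℂ) (qip φ (pauliString A ⊗ₖ pauliString B)))
      = (2 : ℂ) ^ (2 * n) - (2 : ℂ) ^ n * ((S : ℝ) : ℂ) := by
    simp only [hsplit]
    rw [Finset.sum_sub_distrib, sum_AB φ hφ1, sum_A0 φ]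
    congr 1
    have h4 : (∑ i : Fin n → Fin 2, ∑ j : Fin n → Fin 2,
        (∑ k, φ (i, k) * (starRingEnd ℂ) (φ (j, k)))
          * (starRingEnd ℂ) (∑ k, φ (i, k) * (starRingEnd ℂ) (φ (j, k)))) = ((S : ℝ) : ℂ) := by
      simp only [Complex.mul_conj, hS]
      push_cast
      rfl
    rw [h4]
  have hL : (∑ A : Fin n → Fin 4,
        ∑ B ∈ Finset.univ.filter (fun B : Fin n → Fin 4 => B ≠ fun _ => (0 : Fin 4)),
          ‖qip φ (pauliString A ⊗ₖ pauliString B)‖ ^ 2)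
      = (∑ A : Fin n → Fin 4, ∑ B ∈ Finset.univ.filter
          (fun B : Fin n → Fin 4 => B ≠ fun _ => (0 : Fin 4)),
          qip φ (pauliString A ⊗ₖ pauliString B)
            * (starRingEnd ℂ) (qip φ (pauliString A ⊗ₖ pauliString B))).re := by
    rw [Complex.re_sum]
    refine Finset.sum_congr rfl fun A _ => ?_
    rw [Complex.re_sum]
    exact Finset.sum_congr rfl fun B _ => hnorm _
  have htr : ((ptr2 ρφ)ᴴ * ptr2 ρφ).trace.re = S := by
    have hptr : ∀ i j, ptr2 ρφ i j = ∑ k, φ (i, k) * (starRingEnd ℂ) (φ (j, k)) := by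
      intro i j; simp [ptr2, hρφ]
    have hcz : ∀ z : ℂ, (starRingEnd ℂ) z * z = ((Complex.normSq z : ℝ) : ℂ) :=
      fun z => by rw [mul_comm, Complex.mul_conj]
    have h5 : ((ptr2 ρφ)ᴴ * ptr2 ρφ).trace
        = ∑ j, ∑ i, (starRingEnd ℂ) (ptr2 ρφ i j) * ptr2 ρφ i j := by
      simp [Matrix.trace, Matrix.diag, Matrix.mul_apply, Matrix.conjTranspose_apply]
    rw [h5]
    simp only [hcz]
    have h6 : (∑ j, ∑ i, ((Complex.normSq (ptr2 ρφ i j) : ℝ) : ℂ))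
        = (((∑ j, ∑ i, Complex.normSq (ptr2 ρφ i j)) : ℝ) : ℂ) := by
      push_cast; rfl
    rw [h6, Complex.ofReal_re, Finset.sum_comm, hS]
    refine Finset.sum_congr rfl fun i _ => Finset.sum_congr rfl fun j _ => ?_
    rw [hptr]
  have hfrob : frobNorm (ptr2 ρφ) ^ 2 = S := by
    rw [frobNorm, ← htr, Real.sq_sqrt (by rw [htr]; exact hSnonneg)]
  rw [hL, hmain, hfrob]
  have h7 : ((2 : ℂ) ^ (2 * n) - (2 : ℂ) ^ n * ((S : ℝ) : ℂ))
      = ((((2 : ℝ) ^ (2 * n) - (2 : ℝ) ^ n * S) : ℝ) : ℂ) := by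
    push_cast; ring
  rw [h7, Complex.ofReal_re]
end

section
/- Let I and a be nonempty finite types. Let ρ : Matrix (I × a) (I × a) ℂ be positive semidefinite and let φ : a × I → ℂ be a unit vector (∑ x, ‖φ x‖² = 1). Define M : Matrix (I × I) (I × I) ℂ by M (i, o) (i', o') = ∑ k : a, ∑ k' : a, φ (k, o) * conj (φ (k', o')) * ρ ((i, k'), (i', k)). Then ‖Tr (M * M)‖ ≤ ‖Tr M‖², where ‖·‖ on ℂ is the complex absolute value. -/
open Matrix BigOperators ComplexOrder

private lemma three_sum_comm {α β γ R : Type*} [Fintype α] [Fintype β] [Fintype γ]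
    [AddCommMonoid R] (f : α → β → γ → R) :
    ∑ x : α, ∑ y : β, ∑ z : γ, f x y z = ∑ z : γ, ∑ x : α, ∑ y : β, f x y z := by
  have h1 : ∑ x : α, ∑ y : β, ∑ z : γ, f x y z = ∑ x : α, ∑ z : γ, ∑ y : β, f x y z :=
    Finset.sum_congr rfl fun x _ => Finset.sum_comm (f := fun y z => f x y z)
  rw [h1]
  exact Finset.sum_comm (f := fun x z => ∑ y : β, f x y z)

private lemma conj_mul_self' (z : ℂ) : (starRingEnd ℂ) z * z = ((‖z‖ : ℝ) : ℂ) ^ 2 := by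
  rw [mul_comm, Complex.mul_conj]
  simp [Complex.normSq_eq_norm_sq]

/-- for ρ positive semidefinite and φ a unit vector, the partial trace
M = Tr_aux[(1 ⊗ |φ⟩⟨φ|)(ρ ⊗ 1)] (with the given entries) satisfies
|Tr(M²)| ≤ |Tr M|². -/
theorem trace_square_le_trace_sq
    (I a : Type) [Fintype I] [Nonempty I] [Fintype a] [Nonempty a]
    (ρ : Matrix (I × a) (I × a) ℂ) (hρ : ρ.PosSemidef)
    (φ : a × I → ℂ) (hφ : ∑ x, ‖φ x‖ ^ 2 = 1)
    (M : Matrix (I × I) (I × I) ℂ)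
    (hM : ∀ i o i' o', M (i, o) (i', o') =
      ∑ k : a, ∑ k' : a,
        φ (k, o) * (starRingEnd ℂ) (φ (k', o')) * ρ (i, k') (i', k)) :
    ‖(M * M).trace‖ ≤ ‖M.trace‖ ^ 2 := by
  classical
  obtain ⟨C, hC⟩ : ∃ C : Matrix (I × a) (I × a) ℂ, ρ = Cᴴ * C := by
    open scoped MatrixOrder in
    obtain ⟨C, hC⟩ := CStarAlgebra.nonneg_iff_eq_star_mul_self.mp hρ.nonneg
    exact ⟨C, by rw [hC, star_eq_conjTranspose]⟩
  set D : (I × a) → I → I → ℂ := fun m i o => ∑ k : a, φ (k, o) * C m (i, k) with hD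
  have hM' : ∀ i o i' o', M (i, o) (i', o') =
      ∑ m : I × a, (starRingEnd ℂ) (D m i o') * D m i' o := by
    intro i o i' o'
    rw [hM]
    simp only [hC, Matrix.mul_apply, Matrix.conjTranspose_apply, hD, map_sum,
      Finset.sum_mul, Finset.mul_sum]
    rw [three_sum_comm]
    refine Finset.sum_congr rfl fun m _ => Finset.sum_congr rfl fun k _ =>
      Finset.sum_congr rfl fun k' _ => ?_
    simp only [starRingEnd_apply, star_mul']
    ring
  -- f i o = column-norm-squared of D at (i,o)
  set f : I → I → ℝ := fun i o => ∑ m : I × a, ‖D m i o‖ ^ 2 with hf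
  set T : ℝ := ∑ i : I, ∑ o : I, f i o with hT
  set Z : I → I → I → I → ℂ :=
    fun i o i' o' => ∑ m : I × a, (starRingEnd ℂ) (D m i o') * D m i' o with hZ
  set S : ℝ := ∑ i : I, ∑ o : I, ∑ i' : I, ∑ o' : I, ‖Z i o i' o'‖ ^ 2 with hS
  have hfnn : ∀ i o, 0 ≤ f i o := fun i o => Finset.sum_nonneg fun m _ => sq_nonneg _
  have hTnn : 0 ≤ T := Finset.sum_nonneg fun i _ => Finset.sum_nonneg fun o _ => hfnn i o
  have hSnn : 0 ≤ S := by
    refine Finset.sum_nonneg fun i _ => Finset.sum_nonneg fun o _ =>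
      Finset.sum_nonneg fun i' _ => Finset.sum_nonneg fun o' _ => sq_nonneg _
  -- trace M = T
  have htr : M.trace = ((T : ℝ) : ℂ) := by
    have h1 : M.trace = ∑ i : I, ∑ o : I, M (i, o) (i, o) := by
      rw [Matrix.trace, Fintype.sum_prod_type]; rfl
    rw [h1, hT]
    push_cast
    refine Finset.sum_congr rfl fun i _ => Finset.sum_congr rfl fun o _ => ?_
    rw [hM' i o i o, hf]
    push_cast
    exact Finset.sum_congr rfl fun m _ => conj_mul_self' _
  -- trace (M*M) = S
  have htr2 : (M * M).trace = ((S : ℝ) : ℂ) := by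
    have h1 : (M * M).trace =
        ∑ i : I, ∑ o : I, ∑ i' : I, ∑ o' : I, M (i, o) (i', o') * M (i', o') (i, o) := by
      rw [Matrix.trace, Fintype.sum_prod_type]
      refine Finset.sum_congr rfl fun i _ => Finset.sum_congr rfl fun o _ => ?_
      rw [Matrix.diag_apply, Matrix.mul_apply, Fintype.sum_prod_type]
    rw [h1, hS]
    push_cast
    refine Finset.sum_congr rfl fun i _ => Finset.sum_congr rfl fun o _ =>
      Finset.sum_congr rfl fun i' _ => Finset.sum_congr rfl fun o' _ => ?_
    rw [hM' i o i' o', hM' i' o' i o]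
    have hc : (∑ m : I × a, (starRingEnd ℂ) (D m i' o) * D m i o') =
        (starRingEnd ℂ) (∑ m : I × a, (starRingEnd ℂ) (D m i o') * D m i' o) := by
      rw [map_sum]
      refine Finset.sum_congr rfl fun m _ => ?_
      simp only [starRingEnd_apply, star_mul', star_star]
      ring
    rw [hc, Complex.mul_conj, hZ]
    simp [Complex.normSq_eq_norm_sq]
  -- pointwise Cauchy-Schwarz
  have key : ∀ i o i' o', ‖Z i o i' o'‖ ^ 2 ≤ f i o' * f i' o := by
    intro i o i' o'
    have h1 : ‖Z i o i' o'‖ ≤ ∑ m : I × a, ‖D m i o'‖ * ‖D m i' o‖ := by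
      rw [hZ]
      refine (norm_sum_le _ _).trans (le_of_eq ?_)
      refine Finset.sum_congr rfl fun m _ => ?_
      simp [norm_mul]
    calc ‖Z i o i' o'‖ ^ 2 ≤ (∑ m : I × a, ‖D m i o'‖ * ‖D m i' o‖) ^ 2 :=
          pow_le_pow_left₀ (norm_nonneg _) h1 2
      _ ≤ (∑ m : I × a, ‖D m i o'‖ ^ 2) * (∑ m : I × a, ‖D m i' o‖ ^ 2) :=
          Finset.sum_mul_sq_le_sq_mul_sq _ _ _
      _ = f i o' * f i' o := by rw [hf]
  -- sum everything
  have hSle : S ≤ T * T := by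
    have h2 : S ≤ ∑ i : I, ∑ o : I, ∑ i' : I, ∑ o' : I, f i o' * f i' o := by
      rw [hS]
      refine Finset.sum_le_sum fun i _ => Finset.sum_le_sum fun o _ =>
        Finset.sum_le_sum fun i' _ => Finset.sum_le_sum fun o' _ => key i o i' o'
    refine h2.trans (le_of_eq ?_)
    have inner : ∀ i o, (∑ i' : I, ∑ o' : I, f i o' * f i' o)
        = (∑ o' : I, f i o') * (∑ i' : I, f i' o) := by
      intro i o
      rw [Finset.sum_comm]
      exact (Fintype.sum_mul_sum _ _).symm
    calc ∑ i : I, ∑ o : I, ∑ i' : I, ∑ o' : I, f i o' * f i' o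
        = ∑ i : I, ∑ o : I, (∑ o' : I, f i o') * (∑ i' : I, f i' o) := by
          exact Finset.sum_congr rfl fun i _ => Finset.sum_congr rfl fun o _ => inner i o
      _ = (∑ i : I, ∑ o' : I, f i o') * (∑ o : I, ∑ i' : I, f i' o) := by
          rw [Fintype.sum_mul_sum]
      _ = T * T := by rw [hT]; rw [Finset.sum_comm (f := fun o i' => f i' o)]
  have hnormMM : ‖(M * M).trace‖ = S := by
    rw [htr2, Complex.norm_real, Real.norm_eq_abs, abs_of_nonneg hSnn]
  have hnormM : ‖M.trace‖ = T := by
    rw [htr, Complex.norm_real, Real.norm_eq_abs, abs_of_nonneg hTnn]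
  rw [hnormMM, hnormM, sq]
  exact hSle
end

section
/- Let n be a positive integer, I = (Fin n → Fin 2), and a a nonempty finite type. Let ρ : Matrix (I × a) (I × a) ℂ be positive semidefinite with Tr ρ = 1, and let φ : a × I → ℂ be a unit vector (∑ x, ‖φ x‖² = 1). For A : Fin n → Fin 4 define Y_A : Matrix a a ℂ by (Y_A) k k' = ∑ i : I, ∑ i' : I, (P A) i i' * ρ ((i, k), (i', k')). Then ∑ over all pairs (A, B) with A B : Fin n → Fin 4, A ≠ (fun _ => 0) and B ≠ (fun _ => 0), of ‖⟪φ, (Y_A ⊗ₖ (P B)) φ⟫‖² ≤ (2^n + 1)² * ‖⟪φ, (Y_(fun _ => 0) ⊗ₖ 1) φ⟫‖². Moreover, there exist such ρ and φ of product form for which this sum equals (2^n − 1)² * ‖⟪φ, (Y_(fun _ => 0) ⊗ₖ 1) φ⟫‖² with nonzero right-hand side. -/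
open Matrix BigOperators Kronecker ComplexOrder

/-- The matrix Y_A on the auxiliary system, (Y_A) k k' = ∑ i i', (P A) i i' ρ ((i,k),(i',k')). -/
noncomputable def Ymat {n : ℕ} {a : Type*} [Fintype a]
    (ρ : Matrix ((Fin n → Fin 2) × a) ((Fin n → Fin 2) × a) ℂ)
    (A : Fin n → Fin 4) : Matrix a a ℂ :=
  Matrix.of fun k k' => ∑ i, ∑ i', pauliString A i i' * ρ (i, k) (i', k')

/-- The sum ∑_{A ≠ 0} ∑_{B ≠ 0} |⟪φ, (Y_A ⊗ P B) φ⟫|² over the doubly-stochastic Pauli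
sub-ensemble. -/
noncomputable def adaptiveSumBoth (n : ℕ) {a : Type*} [Fintype a]
    (ρ : Matrix ((Fin n → Fin 2) × a) ((Fin n → Fin 2) × a) ℂ)
    (φ : a × (Fin n → Fin 2) → ℂ) : ℝ :=
  ∑ A ∈ Finset.univ.filter (fun A : Fin n → Fin 4 => A ≠ fun _ => (0 : Fin 4)),
    ∑ B ∈ Finset.univ.filter (fun B : Fin n → Fin 4 => B ≠ fun _ => (0 : Fin 4)),
      ‖qip φ (Ymat ρ A ⊗ₖ pauliString B)‖ ^ 2

/-- The quantity |⟪φ, (Y_0 ⊗ 1) φ⟫|² (the squared likelihood denominator). -/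
noncomputable def adaptiveDenom (n : ℕ) {a : Type*} [Fintype a]
    (ρ : Matrix ((Fin n → Fin 2) × a) ((Fin n → Fin 2) × a) ℂ)
    (φ : a × (Fin n → Fin 2) → ℂ) : ℝ :=
  ‖qip φ (Ymat ρ (fun _ => (0 : Fin 4)) ⊗ₖ
    (1 : Matrix (Fin n → Fin 2) (Fin n → Fin 2) ℂ))‖ ^ 2

/-! ### Auxiliary material -/

abbrev PauliAux.II (n : ℕ) := (Fin n → Fin 2) × (Fin n → Fin 2)

namespace PauliAux

lemma pauli_complete (u v u' v' : Fin 2) :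
    ∑ s : Fin 4, (starRingEnd ℂ) (pauli s u v) * pauli s u' v' =
      if u = u' ∧ v = v' then 2 else 0 := by
  fin_cases u <;> fin_cases v <;> fin_cases u' <;> fin_cases v' <;>
    simp [pauli, Fin.sum_univ_four, Matrix.one_apply, Complex.ext_iff] <;> norm_num

lemma pauliString_complete {n : ℕ} (x y x' y' : Fin n → Fin 2) :
    ∑ A : Fin n → Fin 4, (starRingEnd ℂ) (pauliString A x y) * pauliString A x' y' =
      if x = x' ∧ y = y' then (2:ℂ)^n else 0 := by
  have h1 : ∀ A : Fin n → Fin 4, (starRingEnd ℂ) (pauliString A x y) * pauliString A x' y'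
      = ∏ i, ((starRingEnd ℂ) (pauli (A i) (x i) (y i)) * pauli (A i) (x' i) (y' i)) := by
    intro A
    simp [pauliString, map_prod, Finset.prod_mul_distrib]
  simp only [h1]
  rw [← Fintype.piFinset_univ,
    ← Finset.prod_univ_sum (fun _ : Fin n => (Finset.univ : Finset (Fin 4)))
      (fun i s => (starRingEnd ℂ) (pauli s (x i) (y i)) * pauli s (x' i) (y' i))]
  simp only [pauli_complete]
  by_cases h : x = x' ∧ y = y'
  · simp [h.1, h.2, Finset.prod_const]
  · rw [if_neg h]
    have : ∃ i, ¬ (x i = x' i ∧ y i = y' i) := by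
      by_contra hc
      push_neg at hc
      exact h ⟨funext fun i => (hc i).1, funext fun i => (hc i).2⟩
    obtain ⟨i, hi⟩ := this
    exact Finset.prod_eq_zero (Finset.mem_univ i) (by rw [if_neg hi])

lemma pauliString_zero {n : ℕ} : pauliString (fun _ : Fin n => (0 : Fin 4)) = 1 := by
  ext x y
  show (∏ i, pauli 0 (x i) (y i)) = (1 : Matrix (Fin n → Fin 2) (Fin n → Fin 2) ℂ) x y
  have : ∀ i, pauli 0 (x i) (y i) = if x i = y i then 1 else 0 := by
    intro i; simp [pauli, Matrix.one_apply]
  simp only [this, Matrix.one_apply]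
  by_cases h : x = y
  · simp [h]
  · rw [if_neg h]
    obtain ⟨i, hi⟩ : ∃ i, x i ≠ y i := by
      by_contra hc; push_neg at hc; exact h (funext hc)
    exact Finset.prod_eq_zero (Finset.mem_univ i) (by rw [if_neg hi])

/-- The second-moment / Parseval identity for Pauli strings, complex form. -/
lemma second_moment_complex {n : ℕ} (T : Matrix (II n) (II n) ℂ) :
    ∑ A : Fin n → Fin 4, ∑ B : Fin n → Fin 4,
      (starRingEnd ℂ) (∑ p, ∑ q, pauliString A p.1 q.1 * pauliString B p.2 q.2 * T p q) *
        (∑ p, ∑ q, pauliString A p.1 q.1 * pauliString B p.2 q.2 * T p q)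
      = (2:ℂ)^n * ((2:ℂ)^n * ∑ p, ∑ q, (starRingEnd ℂ) (T p q) * T p q) := by
  classical
  have expand : ∀ A B : Fin n → Fin 4,
      (starRingEnd ℂ) (∑ p, ∑ q, pauliString A p.1 q.1 * pauliString B p.2 q.2 * T p q) *
        (∑ p, ∑ q, pauliString A p.1 q.1 * pauliString B p.2 q.2 * T p q)
      = ∑ z : II n × II n × II n × II n,
          ((starRingEnd ℂ) (pauliString A z.2.2.1.1 z.2.2.2.1) * pauliString A z.1.1 z.2.1.1) *
          (((starRingEnd ℂ) (pauliString B z.2.2.1.2 z.2.2.2.2) * pauliString B z.1.2 z.2.1.2) *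
           ((starRingEnd ℂ) (T z.2.2.1 z.2.2.2) * T z.1 z.2.1)) := by
    intro A B
    have h1 :
        (starRingEnd ℂ) (∑ p, ∑ q, pauliString A p.1 q.1 * pauliString B p.2 q.2 * T p q) *
          (∑ p, ∑ q, pauliString A p.1 q.1 * pauliString B p.2 q.2 * T p q)
        = ∑ p : II n, ∑ q : II n, ∑ p' : II n, ∑ q' : II n,
            ((starRingEnd ℂ) (pauliString A p'.1 q'.1) * pauliString A p.1 q.1) *
            (((starRingEnd ℂ) (pauliString B p'.2 q'.2) * pauliString B p.2 q.2) *
             ((starRingEnd ℂ) (T p' q') * T p q)) := by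
      simp only [map_sum, _root_.map_mul, Finset.sum_mul, Finset.mul_sum]
      refine Finset.sum_congr rfl fun p _ => Finset.sum_congr rfl fun q _ =>
        Finset.sum_congr rfl fun p' _ => Finset.sum_congr rfl fun q' _ => by ring
    rw [h1]
    simp only [Fintype.sum_prod_type]
  simp only [expand]
  have swap : (∑ A : Fin n → Fin 4, ∑ B : Fin n → Fin 4, ∑ z : II n × II n × II n × II n,
      ((starRingEnd ℂ) (pauliString A z.2.2.1.1 z.2.2.2.1) * pauliString A z.1.1 z.2.1.1) *
      (((starRingEnd ℂ) (pauliString B z.2.2.1.2 z.2.2.2.2) * pauliString B z.1.2 z.2.1.2) *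
       ((starRingEnd ℂ) (T z.2.2.1 z.2.2.2) * T z.1 z.2.1)))
      = ∑ z : II n × II n × II n × II n, ∑ A : Fin n → Fin 4, ∑ B : Fin n → Fin 4,
      ((starRingEnd ℂ) (pauliString A z.2.2.1.1 z.2.2.2.1) * pauliString A z.1.1 z.2.1.1) *
      (((starRingEnd ℂ) (pauliString B z.2.2.1.2 z.2.2.2.2) * pauliString B z.1.2 z.2.1.2) *
       ((starRingEnd ℂ) (T z.2.2.1 z.2.2.2) * T z.1 z.2.1)) :=
    (Finset.sum_congr rfl fun _ _ => Finset.sum_comm).trans Finset.sum_comm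
  rw [swap]
  have factor : ∀ z : II n × II n × II n × II n,
      (∑ A : Fin n → Fin 4, ∑ B : Fin n → Fin 4,
        ((starRingEnd ℂ) (pauliString A z.2.2.1.1 z.2.2.2.1) * pauliString A z.1.1 z.2.1.1) *
        (((starRingEnd ℂ) (pauliString B z.2.2.1.2 z.2.2.2.2) * pauliString B z.1.2 z.2.1.2) *
         ((starRingEnd ℂ) (T z.2.2.1 z.2.2.2) * T z.1 z.2.1)))
      = (if z.2.2.1.1 = z.1.1 ∧ z.2.2.2.1 = z.2.1.1 then (2:ℂ)^n else 0) *
        ((if z.2.2.1.2 = z.1.2 ∧ z.2.2.2.2 = z.2.1.2 then (2:ℂ)^n else 0) *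
         ((starRingEnd ℂ) (T z.2.2.1 z.2.2.2) * T z.1 z.2.1)) := by
    intro z
    simp only [← Finset.mul_sum, ← Finset.sum_mul]
    rw [pauliString_complete, pauliString_complete]
  simp only [factor]
  have key : ∀ (p q p' q' : II n) (G : ℂ),
      (if p'.1 = p.1 ∧ q'.1 = q.1 then (2:ℂ)^n else 0) *
        ((if p'.2 = p.2 ∧ q'.2 = q.2 then (2:ℂ)^n else 0) * G)
      = if q' = q then (if p' = p then (2:ℂ)^n * ((2:ℂ)^n * G) else 0) else 0 := by
    rintro ⟨p1, p2⟩ ⟨q1, q2⟩ ⟨p1', p2'⟩ ⟨q1', q2'⟩ G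
    simp only [Prod.mk.injEq]
    by_cases h1 : p1' = p1 <;> by_cases h2 : p2' = p2 <;>
      by_cases h3 : q1' = q1 <;> by_cases h4 : q2' = q2 <;>
      simp [h1, h2, h3, h4]
  have expand2 : (∑ z : II n × II n × II n × II n,
      (if z.2.2.1.1 = z.1.1 ∧ z.2.2.2.1 = z.2.1.1 then (2:ℂ)^n else 0) *
        ((if z.2.2.1.2 = z.1.2 ∧ z.2.2.2.2 = z.2.1.2 then (2:ℂ)^n else 0) *
         ((starRingEnd ℂ) (T z.2.2.1 z.2.2.2) * T z.1 z.2.1)))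
      = ∑ p : II n, ∑ q : II n, ∑ p' : II n, ∑ q' : II n,
        (if p'.1 = p.1 ∧ q'.1 = q.1 then (2:ℂ)^n else 0) *
        ((if p'.2 = p.2 ∧ q'.2 = q.2 then (2:ℂ)^n else 0) *
         ((starRingEnd ℂ) (T p' q') * T p q)) := by
    simp only [Fintype.sum_prod_type]
  rw [expand2]
  simp only [key]
  simp only [Finset.sum_ite_eq, Finset.sum_ite_eq', Finset.mem_univ, if_true]
  simp only [Finset.mul_sum]

/-- The auxiliary PSD matrix combining ρ and φ. -/
noncomputable def Tm {n : ℕ} {a : Type} [Fintype a]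
    (ρ : Matrix ((Fin n → Fin 2) × a) ((Fin n → Fin 2) × a) ℂ)
    (φ : a × (Fin n → Fin 2) → ℂ) : Matrix (II n) (II n) ℂ :=
  Matrix.of fun p q => ∑ k, ∑ k',
    (starRingEnd ℂ) (φ (k, p.2)) * ρ (p.1, k) (q.1, k') * φ (k', q.2)

lemma qip_kron {n : ℕ} {a : Type} [Fintype a]
    (ρ : Matrix ((Fin n → Fin 2) × a) ((Fin n → Fin 2) × a) ℂ)
    (φ : a × (Fin n → Fin 2) → ℂ) (A : Fin n → Fin 4)
    (M : Matrix (Fin n → Fin 2) (Fin n → Fin 2) ℂ) :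
    qip φ (Ymat ρ A ⊗ₖ M) =
      ∑ p : II n, ∑ q, pauliString A p.1 q.1 * M p.2 q.2 * Tm ρ φ p q := by
  have hL : qip φ (Ymat ρ A ⊗ₖ M) =
      ∑ z : (a × (Fin n → Fin 2)) × (a × (Fin n → Fin 2)) × (Fin n → Fin 2) × (Fin n → Fin 2),
        (starRingEnd ℂ) (φ z.1) *
          (pauliString A z.2.2.1 z.2.2.2 * ρ (z.2.2.1, z.1.1) (z.2.2.2, z.2.1.1)
            * M z.1.2 z.2.1.2) * φ z.2.1 := by
    simp only [qip, Ymat, kroneckerMap_apply, of_apply, Fintype.sum_prod_type,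
      Finset.sum_mul, Finset.mul_sum]
  have hR : (∑ p : II n, ∑ q, pauliString A p.1 q.1 * M p.2 q.2 * Tm ρ φ p q) =
      ∑ w : II n × II n × a × a,
        pauliString A w.1.1 w.2.1.1 * M w.1.2 w.2.1.2 *
          ((starRingEnd ℂ) (φ (w.2.2.1, w.1.2)) * ρ (w.1.1, w.2.2.1) (w.2.1.1, w.2.2.2)
            * φ (w.2.2.2, w.2.1.2)) := by
    simp only [Tm, of_apply, Fintype.sum_prod_type, Finset.sum_mul, Finset.mul_sum]
  rw [hL, hR]
  exact Fintype.sum_equiv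
    ⟨fun z => ((z.2.2.1, z.1.2), (z.2.2.2, z.2.1.2), z.1.1, z.2.1.1),
     fun w => ((w.2.2.1, w.1.2), (w.2.2.2, w.2.1.2), w.1.1, w.2.1.1),
     fun z => rfl, fun w => rfl⟩ _ _
    (fun z => by simp only [Equiv.coe_fn_mk]; ring)

lemma qip_one {n : ℕ} {a : Type} [Fintype a]
    (ρ : Matrix ((Fin n → Fin 2) × a) ((Fin n → Fin 2) × a) ℂ)
    (φ : a × (Fin n → Fin 2) → ℂ) :
    qip φ (Ymat ρ (fun _ => (0 : Fin 4)) ⊗ₖ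
        (1 : Matrix (Fin n → Fin 2) (Fin n → Fin 2) ℂ)) = ∑ p, Tm ρ φ p p := by
  rw [qip_kron]
  simp only [pauliString_zero, Matrix.one_apply]
  have key : ∀ p q : II n, ((if p.1 = q.1 then (1:ℂ) else 0) *
      (if p.2 = q.2 then (1:ℂ) else 0) * Tm ρ φ p q) =
      if q = p then Tm ρ φ p q else 0 := by
    rintro ⟨p1, p2⟩ ⟨q1, q2⟩
    simp only [Prod.mk.injEq]
    by_cases h1 : p1 = q1 <;> by_cases h2 : p2 = q2 <;>
      simp [h1, h2, eq_comm]
  simp only [key]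
  refine Finset.sum_congr rfl fun p _ => ?_
  rw [Finset.sum_ite_eq' Finset.univ p (fun q => Tm ρ φ p q)]
  simp

lemma Tm_posSemidef {n : ℕ} {a : Type} [Fintype a]
    (ρ : Matrix ((Fin n → Fin 2) × a) ((Fin n → Fin 2) × a) ℂ) (hρ : ρ.PosSemidef)
    (φ : a × (Fin n → Fin 2) → ℂ) : (Tm ρ φ).PosSemidef := by
  classical
  set X : Matrix ((Fin n → Fin 2) × a) (II n) ℂ :=
    Matrix.of fun w p => if w.1 = p.1 then φ (w.2, p.2) else 0 with hX
  have : Tm ρ φ = Xᴴ * ρ * X := by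
    ext p q
    simp only [Tm, Matrix.of_apply, Matrix.mul_apply, Matrix.conjTranspose_apply, hX,
      Fintype.sum_prod_type_right, apply_ite, map_zero, star_zero, starRingEnd_apply,
      ite_mul, zero_mul, mul_ite, mul_zero,
      Finset.sum_ite_eq, Finset.sum_ite_eq', Finset.mem_univ, if_true, Finset.sum_mul,
      Finset.mul_sum]
    exact Finset.sum_comm
  rw [this]
  exact hρ.conjTranspose_mul_mul_same X

lemma cs_cols {n : ℕ} (C : Matrix (II n) (II n) ℂ) (p q : II n) :
    ‖∑ r, (starRingEnd ℂ) (C r p) * C r q‖ ^ 2 ≤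
      (∑ r, ‖C r p‖ ^ 2) * (∑ r, ‖C r q‖ ^ 2) := by
  let u : EuclideanSpace ℂ (II n) := WithLp.toLp 2 fun r => C r p
  let v : EuclideanSpace ℂ (II n) := WithLp.toLp 2 fun r => C r q
  have h1 : (∑ r, (starRingEnd ℂ) (C r p) * C r q) = inner ℂ u v := by
    simp [u, v, PiLp.inner_apply, RCLike.inner_apply, mul_comm]
  have h2 : ‖u‖ ^ 2 = ∑ r, ‖C r p‖ ^ 2 := by
    rw [EuclideanSpace.norm_eq, Real.sq_sqrt (Finset.sum_nonneg fun _ _ => by positivity)]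
  have h3 : ‖v‖ ^ 2 = ∑ r, ‖C r q‖ ^ 2 := by
    rw [EuclideanSpace.norm_eq, Real.sq_sqrt (Finset.sum_nonneg fun _ _ => by positivity)]
  rw [h1, ← h2, ← h3, ← mul_pow]
  exact pow_le_pow_left₀ (norm_nonneg _) (norm_inner_le_norm u v) 2

lemma norm_sq_cast (z : ℂ) : ((‖z‖ ^ 2 : ℝ) : ℂ) = (starRingEnd ℂ) z * z := by
  rw [← Complex.normSq_eq_conj_mul_self, Complex.sq_norm]

set_option maxHeartbeats 1000000 in
theorem upper_bound {n : ℕ} {a : Type} [Fintype a]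
    (ρ : Matrix ((Fin n → Fin 2) × a) ((Fin n → Fin 2) × a) ℂ) (hρ : ρ.PosSemidef)
    (φ : a × (Fin n → Fin 2) → ℂ) :
    adaptiveSumBoth n ρ φ ≤ ((2 : ℝ) ^ n + 1) ^ 2 * adaptiveDenom n ρ φ := by
  classical
  obtain ⟨C, hC⟩ : ∃ C : Matrix (II n) (II n) ℂ, Tm ρ φ = Cᴴ * C := by
    open scoped MatrixOrder Matrix.Norms.L2Operator in
    exact CStarAlgebra.nonneg_iff_eq_star_mul_self.mp (Tm_posSemidef ρ hρ φ).nonneg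
  have hTpq : ∀ p q, Tm ρ φ p q = ∑ r, (starRingEnd ℂ) (C r p) * C r q := by
    intro p q
    rw [hC]
    simp only [Matrix.mul_apply, Matrix.conjTranspose_apply, starRingEnd_apply]
  set f : II n → ℝ := fun p => ∑ r, ‖C r p‖ ^ 2 with hf
  set s : ℝ := ∑ p, f p with hs
  have hf0 : ∀ p, 0 ≤ f p := fun p => Finset.sum_nonneg fun _ _ => by positivity
  have hs0 : 0 ≤ s := Finset.sum_nonneg fun p _ => hf0 p
  have hdiag : (∑ p, Tm ρ φ p p) = (s : ℂ) := by
    rw [hs, Complex.ofReal_sum]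
    refine Finset.sum_congr rfl fun p _ => ?_
    rw [hTpq, hf, Complex.ofReal_sum]
    exact Finset.sum_congr rfl fun r _ => (norm_sq_cast _).symm
  have hdenom : adaptiveDenom n ρ φ = s ^ 2 := by
    rw [adaptiveDenom, qip_one, hdiag]
    rw [Complex.norm_real, Real.norm_eq_abs, sq_abs]
  have hall : (∑ A : Fin n → Fin 4, ∑ B : Fin n → Fin 4,
      ‖qip φ (Ymat ρ A ⊗ₖ pauliString B)‖ ^ 2)
      = (2:ℝ)^n * ((2:ℝ)^n * ∑ p, ∑ q, ‖Tm ρ φ p q‖ ^ 2) := by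
    have hallC : (∑ A : Fin n → Fin 4, ∑ B : Fin n → Fin 4,
        (starRingEnd ℂ) (qip φ (Ymat ρ A ⊗ₖ pauliString B)) *
          qip φ (Ymat ρ A ⊗ₖ pauliString B))
        = (2:ℂ)^n * ((2:ℂ)^n * ∑ p, ∑ q, (starRingEnd ℂ) (Tm ρ φ p q) * Tm ρ φ p q) := by
      simp only [qip_kron]
      exact second_moment_complex (Tm ρ φ)
    have cast1 : ((∑ p, ∑ q, ‖Tm ρ φ p q‖ ^ 2 : ℝ) : ℂ)
        = ∑ p, ∑ q, (starRingEnd ℂ) (Tm ρ φ p q) * Tm ρ φ p q := by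
      rw [Complex.ofReal_sum]
      refine Finset.sum_congr rfl fun p _ => ?_
      rw [Complex.ofReal_sum]
      exact Finset.sum_congr rfl fun q _ => norm_sq_cast _
    have cast2 : ((∑ A : Fin n → Fin 4, ∑ B : Fin n → Fin 4,
        ‖qip φ (Ymat ρ A ⊗ₖ pauliString B)‖ ^ 2 : ℝ) : ℂ)
        = ∑ A : Fin n → Fin 4, ∑ B : Fin n → Fin 4,
          (starRingEnd ℂ) (qip φ (Ymat ρ A ⊗ₖ pauliString B)) *
            qip φ (Ymat ρ A ⊗ₖ pauliString B) := by
      rw [Complex.ofReal_sum]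
      refine Finset.sum_congr rfl fun A _ => ?_
      rw [Complex.ofReal_sum]
      exact Finset.sum_congr rfl fun B _ => norm_sq_cast _
    apply Complex.ofReal_injective
    rw [cast2, Complex.ofReal_mul, Complex.ofReal_mul, Complex.ofReal_pow,
      Complex.ofReal_ofNat, cast1]
    exact hallC
  have hHS : (∑ p, ∑ q, ‖Tm ρ φ p q‖ ^ 2) ≤ s * s := by
    have : (∑ p, ∑ q, ‖Tm ρ φ p q‖ ^ 2) ≤ ∑ p, ∑ q, f p * f q := by
      refine Finset.sum_le_sum fun p _ => Finset.sum_le_sum fun q _ => ?_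
      rw [hTpq]
      exact cs_cols C p q
    refine this.trans ?_
    exact le_of_eq (Finset.sum_mul_sum Finset.univ Finset.univ f f).symm
  have hrestrict : adaptiveSumBoth n ρ φ ≤ ∑ A : Fin n → Fin 4, ∑ B : Fin n → Fin 4,
      ‖qip φ (Ymat ρ A ⊗ₖ pauliString B)‖ ^ 2 := by
    rw [adaptiveSumBoth]
    refine le_trans (Finset.sum_le_sum fun A _ =>
      Finset.sum_le_univ_sum_of_nonneg (fun B => pow_nonneg (norm_nonneg _) 2)) ?_
    exact Finset.sum_le_univ_sum_of_nonneg
      (fun A => Finset.sum_nonneg fun _ _ => pow_nonneg (norm_nonneg _) 2)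
  calc adaptiveSumBoth n ρ φ ≤ (2:ℝ)^n * ((2:ℝ)^n * ∑ p, ∑ q, ‖Tm ρ φ p q‖ ^ 2) :=
        hrestrict.trans hall.le
    _ ≤ (2:ℝ)^n * ((2:ℝ)^n * (s * s)) := by
        have h2 : (0:ℝ) ≤ (2:ℝ)^n := by positivity
        exact mul_le_mul_of_nonneg_left (mul_le_mul_of_nonneg_left hHS h2) h2
    _ ≤ ((2 : ℝ) ^ n + 1) ^ 2 * adaptiveDenom n ρ φ := by
        rw [hdenom]
        have h2 : (0:ℝ) ≤ (2:ℝ)^n := by positivity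
        nlinarith [sq_nonneg s, mul_nonneg h2 h2]

/-! ### The extremal example -/

noncomputable def rhoEx (n : ℕ) (a : Type) [Fintype a] [DecidableEq a] [Nonempty a] :
    Matrix ((Fin n → Fin 2) × a) ((Fin n → Fin 2) × a) ℂ :=
  Matrix.of fun w w' =>
    (if w = ((0 : Fin n → Fin 2), (Classical.arbitrary a)) then 1 else 0) *
    (if w' = ((0 : Fin n → Fin 2), (Classical.arbitrary a)) then 1 else 0)

noncomputable def phiEx (n : ℕ) (a : Type) [Fintype a] [DecidableEq a] [Nonempty a] :
    a × (Fin n → Fin 2) → ℂ :=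
  fun x => (if x.1 = (Classical.arbitrary a) then 1 else 0) *
    (if x.2 = (0 : Fin n → Fin 2) then 1 else 0)

lemma Tm_ex {n : ℕ} {a : Type} [Fintype a] [DecidableEq a] [Nonempty a] :
    Tm (rhoEx n a) (phiEx n a) = Matrix.of (fun p q : II n =>
    (if p = ((0 : Fin n → Fin 2), (0 : Fin n → Fin 2)) then 1 else 0) *
    (if q = ((0 : Fin n → Fin 2), (0 : Fin n → Fin 2)) then 1 else 0)) := by
  classical
  ext p q
  rcases p with ⟨p1, p2⟩
  rcases q with ⟨q1, q2⟩
  simp only [Tm, rhoEx, phiEx, Matrix.of_apply, Prod.mk.injEq, Prod.ext_iff]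
  by_cases h1 : p1 = 0 <;> by_cases h2 : p2 = 0 <;> by_cases h3 : q1 = 0 <;>
    by_cases h4 : q2 = 0 <;>
    simp [h1, h2, h3, h4, apply_ite, ite_and, mul_ite, ite_mul, Finset.sum_ite_eq,
      Finset.sum_ite_eq']

lemma qip_ex {n : ℕ} {a : Type} [Fintype a] [DecidableEq a] [Nonempty a]
    (A B : Fin n → Fin 4) :
    qip (phiEx n a) (Ymat (rhoEx n a) A ⊗ₖ pauliString B)
      = pauliString A 0 0 * pauliString B 0 0 := by
  rw [qip_kron, Tm_ex]
  simp only [Matrix.of_apply, mul_ite, mul_one, mul_zero, ite_mul, zero_mul, one_mul]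
  simp [Finset.sum_ite_eq, Finset.sum_ite_eq']

lemma denom_ex {n : ℕ} {a : Type} [Fintype a] [DecidableEq a] [Nonempty a] :
    qip (phiEx n a) (Ymat (rhoEx n a) (fun _ => (0 : Fin 4)) ⊗ₖ
      (1 : Matrix (Fin n → Fin 2) (Fin n → Fin 2) ℂ)) = 1 := by
  rw [qip_one, Tm_ex]
  simp [Finset.sum_ite_eq, Finset.sum_ite_eq']

lemma paulicount {n : ℕ} :
    ∑ A : Fin n → Fin 4, ‖pauliString A (0 : Fin n → Fin 2) 0‖ ^ 2 = (2:ℝ)^n := by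
  have h1 : ∀ A : Fin n → Fin 4, ‖pauliString A (0 : Fin n → Fin 2) 0‖ ^ 2
      = ∏ i, ‖pauli (A i) 0 0‖ ^ 2 := by
    intro A
    rw [pauliString]
    simp only [Matrix.of_apply, Pi.zero_apply]
    rw [norm_prod]
    rw [← Finset.prod_pow]
  simp only [h1]
  rw [← Fintype.piFinset_univ,
    ← Finset.prod_univ_sum (fun _ : Fin n => (Finset.univ : Finset (Fin 4)))
      (fun _ s => ‖pauli s 0 0‖ ^ 2)]
  have h2 : (∑ s : Fin 4, ‖pauli s 0 0‖ ^ 2) = 2 := by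
    simp [Fin.sum_univ_four, pauli, Matrix.one_apply]; norm_num
  rw [h2]
  simp

lemma paulicount_ne {n : ℕ} :
    ∑ A ∈ Finset.univ.filter (fun A : Fin n → Fin 4 => A ≠ fun _ => (0 : Fin 4)),
      ‖pauliString A (0 : Fin n → Fin 2) 0‖ ^ 2 = (2:ℝ)^n - 1 := by
  classical
  rw [Finset.filter_ne']
  have h := Finset.sum_erase_add Finset.univ
    (fun A : Fin n → Fin 4 => ‖pauliString A (0 : Fin n → Fin 2) 0‖ ^ 2)
    (Finset.mem_univ (fun _ : Fin n => (0 : Fin 4)))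
  have h0 : ‖pauliString (fun _ : Fin n => (0 : Fin 4)) (0 : Fin n → Fin 2) 0‖ ^ 2 = 1 := by
    rw [pauliString_zero]
    simp [Matrix.one_apply]
  rw [paulicount, h0] at h
  linarith

end PauliAux

open PauliAux in
/-- the two-sided estimate for the doubly-stochastic ensemble. -/
theorem adaptive_second_moment_doubly_stochastic
    (n : ℕ) (hn : 0 < n) (a : Type) [Fintype a] [DecidableEq a] [Nonempty a]
    (ρ : Matrix ((Fin n → Fin 2) × a) ((Fin n → Fin 2) × a) ℂ)
    (hρ : ρ.PosSemidef) (hρtr : ρ.trace = 1)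
    (φ : a × (Fin n → Fin 2) → ℂ) (hφ : ∑ x, ‖φ x‖ ^ 2 = 1) :
    adaptiveSumBoth n ρ φ ≤ ((2 : ℝ) ^ n + 1) ^ 2 * adaptiveDenom n ρ φ ∧
    ∃ (ρ' : Matrix ((Fin n → Fin 2) × a) ((Fin n → Fin 2) × a) ℂ)
      (φ' : a × (Fin n → Fin 2) → ℂ),
        ρ'.PosSemidef ∧ ρ'.trace = 1 ∧ (∑ x, ‖φ' x‖ ^ 2 = 1) ∧
        (∃ (ρI : Matrix (Fin n → Fin 2) (Fin n → Fin 2) ℂ) (ρa : Matrix a a ℂ),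
          ρ' = ρI ⊗ₖ ρa) ∧
        (∃ (ψ : a → ℂ) (χ : (Fin n → Fin 2) → ℂ), ∀ k o, φ' (k, o) = ψ k * χ o) ∧
        adaptiveSumBoth n ρ' φ' = ((2 : ℝ) ^ n - 1) ^ 2 * adaptiveDenom n ρ' φ' ∧
        adaptiveDenom n ρ' φ' ≠ 0 := by
  classical
  constructor
  · exact upper_bound ρ hρ φ
  refine ⟨rhoEx n a, phiEx n a, ?_, ?_, ?_, ?_, ?_, ?_, ?_⟩
  · -- PosSemidef
    set z : (Fin n → Fin 2) × a := ((0 : Fin n → Fin 2), Classical.arbitrary a) with hz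
    set B : Matrix ((Fin n → Fin 2) × a) ((Fin n → Fin 2) × a) ℂ :=
      Matrix.of (fun u w => if u = z then (if w = z then (1:ℂ) else 0) else 0) with hB
    have : rhoEx n a = Bᴴ * B := by
      ext w w'
      simp only [rhoEx, Matrix.of_apply, Matrix.mul_apply, Matrix.conjTranspose_apply,
        hB, hz, apply_ite, star_zero, star_one, ite_mul, zero_mul, mul_ite, mul_zero,
        Finset.sum_ite_eq, Finset.sum_ite_eq', Finset.mem_univ, if_true]
      split_ifs <;> simp_all
    rw [this]
    exact Matrix.posSemidef_conjTranspose_mul_self B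
  · -- trace
    rw [Matrix.trace]
    simp only [Matrix.diag, rhoEx, Matrix.of_apply, mul_ite, mul_one, mul_zero, ite_mul,
      zero_mul, one_mul]
    simp [Finset.sum_ite_eq, Finset.sum_ite_eq']
  · -- normalization of φ'
    have key : ∀ x : a × (Fin n → Fin 2), ‖phiEx n a x‖ ^ 2
        = if x = (Classical.arbitrary a, (0 : Fin n → Fin 2)) then 1 else 0 := by
      rintro ⟨k, o⟩
      by_cases h1 : k = Classical.arbitrary a <;> by_cases h2 : o = (0 : Fin n → Fin 2) <;>
        simp [phiEx, h1, h2, Prod.ext_iff]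
    simp only [key]
    simp [Finset.sum_ite_eq, Finset.sum_ite_eq']
  · -- product form of ρ'
    refine ⟨Matrix.of (fun i i' : Fin n → Fin 2 =>
        (if i = 0 then (1:ℂ) else 0) * (if i' = 0 then 1 else 0)),
      Matrix.of (fun k k' : a =>
        (if k = Classical.arbitrary a then (1:ℂ) else 0) *
          (if k' = Classical.arbitrary a then 1 else 0)), ?_⟩
    ext ⟨i, k⟩ ⟨i', k'⟩
    simp only [rhoEx, Matrix.of_apply, kroneckerMap_apply, Prod.mk.injEq, Prod.ext_iff]
    by_cases h1 : i = 0 <;> by_cases h2 : k = Classical.arbitrary a <;>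
      by_cases h3 : i' = 0 <;> by_cases h4 : k' = Classical.arbitrary a <;>
      simp [h1, h2, h3, h4, ite_and]
  · -- product form of φ'
    exact ⟨fun k => if k = Classical.arbitrary a then 1 else 0,
      fun o => if o = (0 : Fin n → Fin 2) then 1 else 0, fun k o => rfl⟩
  · -- the exact value
    have hden : adaptiveDenom n (rhoEx n a) (phiEx n a) = 1 := by
      rw [adaptiveDenom, denom_ex]
      simp
    rw [hden, adaptiveSumBoth]
    have hterm : ∀ A B : Fin n → Fin 4,
        ‖qip (phiEx n a) (Ymat (rhoEx n a) A ⊗ₖ pauliString B)‖ ^ 2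
        = ‖pauliString A (0 : Fin n → Fin 2) 0‖ ^ 2 *
          ‖pauliString B (0 : Fin n → Fin 2) 0‖ ^ 2 := by
      intro A B
      rw [qip_ex, norm_mul, mul_pow]
    simp only [hterm]
    rw [← Finset.sum_mul_sum]
    rw [paulicount_ne]
    ring
  · -- denominator nonzero
    have hden : adaptiveDenom n (rhoEx n a) (phiEx n a) = 1 := by
      rw [adaptiveDenom, denom_ex]
      simp
    rw [hden]
    norm_num
end

section
/- Let n be a positive integer and I = (Fin n → Fin 2). Let α : (Fin n → Fin 4) → ℝ and H = ∑ A, (α A : ℂ) • P A. Let A : Fin n → Fin 4 with A ≠ (fun _ => 0), let j : Fin n with A j ≠ 0, and let B : Fin n → Fin 4 satisfy B j ≠ 0, B j ≠ A j, and B k = 0 for all k ≠ j. Set ρ = ((2^n : ℂ))⁻¹ • (1 + (I/2 : ℂ) • ((P A) * (P B) − (P B) * (P A))). Then Tr ((P B) * ((−I : ℂ) • (H * ρ − ρ * H))) = (2 * α A : ℂ). -/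
open Matrix BigOperators

noncomputable def tmat {ι : Type*} [Fintype ι] (M : ι → Matrix (Fin 2) (Fin 2) ℂ) :
    Matrix (ι → Fin 2) (ι → Fin 2) ℂ :=
  Matrix.of fun x y => ∏ i, M i (x i) (y i)

lemma tmat_mul {ι : Type*} [Fintype ι] [DecidableEq ι]
    (M N : ι → Matrix (Fin 2) (Fin 2) ℂ) :
    tmat M * tmat N = tmat (fun i => M i * N i) := by
  ext x y
  show ∑ g : ι → Fin 2, (∏ i, M i (x i) (g i)) * (∏ i, N i (g i) (y i))
      = ∏ i, ∑ z, M i (x i) z * N i z (y i)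
  rw [Finset.prod_univ_sum (fun _ => Finset.univ) (fun i z => M i (x i) z * N i z (y i)),
    Fintype.piFinset_univ]
  exact Finset.sum_congr rfl fun g _ => (Finset.prod_mul_distrib).symm

lemma tmat_trace {ι : Type*} [Fintype ι] [DecidableEq ι]
    (M : ι → Matrix (Fin 2) (Fin 2) ℂ) :
    (tmat M).trace = ∏ i, (M i).trace := by
  show ∑ x : ι → Fin 2, ∏ i, M i (x i) (x i) = ∏ i, ∑ z, M i z z
  rw [Finset.prod_univ_sum (fun _ => Finset.univ) (fun i z => M i z z),
    Fintype.piFinset_univ]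

lemma pauli_zero : pauli 0 = 1 := rfl

lemma trace2 (a c : Fin 4) : (pauli c * pauli a).trace = if c = a then 2 else 0 := by
  fin_cases a <;> fin_cases c <;>
    simp [pauli, Matrix.trace_fin_two, Matrix.mul_apply, Fin.sum_univ_succ, Complex.ext_iff] <;>
    norm_num [Complex.ext_iff]

lemma trace2' (a c : Fin 4) : (pauli a * pauli c).trace = if c = a then 2 else 0 := by
  rw [Matrix.trace_mul_comm, trace2]

lemma site_key (a b c : Fin 4) (ha : a ≠ 0) (hb : b ≠ 0) (hba : b ≠ a) :
    (pauli b * pauli c * pauli a * pauli b).trace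
    - (pauli b * pauli c * pauli b * pauli a).trace
    - (pauli b * pauli a * pauli b * pauli c).trace
    + (pauli b * pauli b * pauli a * pauli c).trace
    = if c = a then 8 else 0 := by
  fin_cases a <;> fin_cases b <;> fin_cases c <;>
    simp_all [pauli, Matrix.trace_fin_two, Matrix.mul_apply, Fin.sum_univ_succ] <;>
    norm_num [Complex.ext_iff]

lemma key (n : ℕ) (A B C : Fin n → Fin 4) (j : Fin n)
    (hAj : A j ≠ 0) (hBj : B j ≠ 0) (hBAj : B j ≠ A j) (hB : ∀ k, k ≠ j → B k = 0) :
    (pauliString B * pauliString C * pauliString A * pauliString B).trace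
    - (pauliString B * pauliString C * pauliString B * pauliString A).trace
    - (pauliString B * pauliString A * pauliString B * pauliString C).trace
    + (pauliString B * pauliString B * pauliString A * pauliString C).trace
    = if C = A then 2 ^ (n + 2) else 0 := by
  have hPS : ∀ D : Fin n → Fin 4, pauliString D = tmat fun i => pauli (D i) := fun _ => rfl
  simp only [hPS, tmat_mul, tmat_trace]
  rw [← Finset.mul_prod_erase Finset.univ _ (Finset.mem_univ j),
      ← Finset.mul_prod_erase Finset.univ _ (Finset.mem_univ j),
      ← Finset.mul_prod_erase Finset.univ _ (Finset.mem_univ j),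
      ← Finset.mul_prod_erase Finset.univ _ (Finset.mem_univ j)]
  have h1 : ∏ k ∈ Finset.univ.erase j, (pauli (B k) * pauli (C k) * pauli (A k) * pauli (B k)).trace
      = ∏ k ∈ Finset.univ.erase j, (if C k = A k then (2:ℂ) else 0) :=
    Finset.prod_congr rfl fun k hk => by
      rw [hB k (Finset.ne_of_mem_erase hk), pauli_zero]; simp [trace2]
  have h2 : ∏ k ∈ Finset.univ.erase j, (pauli (B k) * pauli (C k) * pauli (B k) * pauli (A k)).trace
      = ∏ k ∈ Finset.univ.erase j, (if C k = A k then (2:ℂ) else 0) :=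
    Finset.prod_congr rfl fun k hk => by
      rw [hB k (Finset.ne_of_mem_erase hk), pauli_zero]; simp [trace2]
  have h3 : ∏ k ∈ Finset.univ.erase j, (pauli (B k) * pauli (A k) * pauli (B k) * pauli (C k)).trace
      = ∏ k ∈ Finset.univ.erase j, (if C k = A k then (2:ℂ) else 0) :=
    Finset.prod_congr rfl fun k hk => by
      rw [hB k (Finset.ne_of_mem_erase hk), pauli_zero]; simp [trace2']
  have h4 : ∏ k ∈ Finset.univ.erase j, (pauli (B k) * pauli (B k) * pauli (A k) * pauli (C k)).trace
      = ∏ k ∈ Finset.univ.erase j, (if C k = A k then (2:ℂ) else 0) :=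
    Finset.prod_congr rfl fun k hk => by
      rw [hB k (Finset.ne_of_mem_erase hk), pauli_zero]; simp [trace2']
  rw [h1, h2, h3, h4]
  rw [← sub_mul, ← sub_mul, ← add_mul, site_key _ _ _ hAj hBj hBAj]
  by_cases hCA : C = A
  · subst hCA
    simp only [eq_self_iff_true, if_true]
    have hcard : (Finset.univ.erase j).card = n - 1 := by
      rw [Finset.card_erase_of_mem (Finset.mem_univ j)]; simp
    rw [Finset.prod_const, hcard]
    rw [show (8:ℂ) = 2^3 by norm_num, ← pow_add]
    congr 1
    have := j.pos
    omega
  · rw [if_neg hCA]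
    obtain ⟨k, hk⟩ := Function.ne_iff.mp hCA
    by_cases hkj : k = j
    · subst hkj
      rw [if_neg hk, zero_mul]
    · rw [Finset.prod_eq_zero (Finset.mem_erase.mpr ⟨hkj, Finset.mem_univ k⟩)
        (if_neg hk : (if C k = A k then (2:ℂ) else 0) = 0), mul_zero]

/-- isolating a single Pauli coefficient of a Hamiltonian
H = ∑_A α(A) σ_A via the first-order commutator term:
Tr[σ_B · (−i[H, ρ])] = 2 α(A) for ρ = (1 + (i/2)[σ_A, σ_B])/2ⁿ, where B differs from A
and from 0 only in a single site j where A is nonzero. -/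
theorem isolating_single_pauli_coefficient
    (n : ℕ) (hn : 0 < n) (α : (Fin n → Fin 4) → ℝ)
    (H : Matrix (Fin n → Fin 2) (Fin n → Fin 2) ℂ)
    (hH : H = ∑ A, (α A : ℂ) • pauliString A)
    (A : Fin n → Fin 4) (hA : A ≠ fun _ => (0 : Fin 4))
    (j : Fin n) (hAj : A j ≠ 0)
    (B : Fin n → Fin 4) (hBj : B j ≠ 0) (hBAj : B j ≠ A j)
    (hB : ∀ k, k ≠ j → B k = 0)
    (ρ : Matrix (Fin n → Fin 2) (Fin n → Fin 2) ℂ)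
    (hρ : ρ = ((2 : ℂ) ^ n)⁻¹ •
      (1 + (Complex.I / 2) •
        (pauliString A * pauliString B - pauliString B * pauliString A))) :
    (pauliString B * ((-Complex.I) • (H * ρ - ρ * H))).trace = 2 * (α A : ℂ) := by
  set K := pauliString A * pauliString B - pauliString B * pauliString A with hK
  have hcomm : H * ρ - ρ * H
      = (((2:ℂ)^n)⁻¹ * (Complex.I/2)) • (H * K - K * H) := by
    rw [hρ]
    simp only [Matrix.mul_smul, Matrix.smul_mul, Matrix.mul_add, Matrix.add_mul,
      Matrix.mul_one, Matrix.one_mul, smul_smul, smul_sub, Matrix.mul_sub, Matrix.sub_mul]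
    module
  have hterm : ∀ C : Fin n → Fin 4,
      (pauliString B * (pauliString C * K - K * pauliString C)).trace
        = if C = A then (2:ℂ)^(n+2) else 0 := by
    intro C
    have h := key n A B C j hAj hBj hBAj hB
    simp only [Matrix.mul_assoc] at h
    rw [hK]
    simp only [Matrix.mul_sub, Matrix.sub_mul, Matrix.trace_sub, Matrix.mul_assoc]
    linear_combination h
  have hHK : H * K - K * H
      = ∑ C, (α C : ℂ) • (pauliString C * K - K * pauliString C) := by
    rw [hH]
    rw [Finset.sum_mul, Matrix.mul_sum]
    simp only [Matrix.smul_mul, Matrix.mul_smul, smul_sub]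
    rw [← Finset.sum_sub_distrib]
  rw [hcomm, hHK]
  simp only [Matrix.mul_smul, Matrix.trace_smul, Matrix.mul_sum, Matrix.trace_sum, smul_eq_mul]
  have : ∑ C, ((α C : ℂ)) * (pauliString B * (pauliString C * K - K * pauliString C)).trace
      = (α A : ℂ) * (2:ℂ)^(n+2) := by
    rw [Finset.sum_congr rfl fun C _ => by rw [hterm C]]
    simp [Finset.sum_ite_eq', mul_ite, mul_zero]
  rw [this]
  have h2 : ((2:ℂ)^n) ≠ 0 := pow_ne_zero _ two_ne_zero
  rw [pow_add]
  field_simp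
  ring_nf
  rw [Complex.I_sq]
  ring
end

section
/- Let d be a positive integer and let H, B, ρ : Matrix (Fin d) (Fin d) ℂ with H Hermitian. Define f : ℝ → ℂ by f t = Tr (B * Matrix.exp (−(I * t) • H) * ρ * Matrix.exp ((I * t) • H)). Then for every k : ℕ and τ : ℝ, iteratedDeriv k f τ = I^k * Tr (((fun X => H * X − X * H)^[k] B) * Matrix.exp (−(I * τ) • H) * ρ * Matrix.exp ((I * τ) • H)). -/
open Matrix BigOperators

section Helpers

attribute [local instance] Matrix.linftyOpNormedRing Matrix.linftyOpNormedAlgebra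

variable {d : ℕ}

-- derivative of t ↦ exp ℂ ((c*t) • H) over ℝ
lemma heis_hasDerivAt_exp (H : Matrix (Fin d) (Fin d) ℂ) (c : ℂ) (τ : ℝ) :
    HasDerivAt (fun t : ℝ => NormedSpace.exp ((c * (t : ℂ)) • H))
      ((c • H) * NormedSpace.exp ((c * (τ : ℂ)) • H)) τ := by
  have h1 : HasDerivAt (fun z : ℂ => NormedSpace.exp (z • (c • H)))
      ((c • H) * NormedSpace.exp (((τ : ℂ)) • (c • H))) (τ : ℂ) :=
    hasDerivAt_exp_smul_const' (c • H) (τ : ℂ)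
  have h2 : HasDerivAt (fun t : ℝ => ((t : ℂ))) (1 : ℂ) τ := by
    exact (hasDerivAt_id τ).ofReal_comp
  have h3 := h1.scomp τ h2
  simp only [one_smul] at h3
  have he : ∀ z : ℂ, z • (c • H) = (c * z) • H := by
    intro z; rw [smul_smul, mul_comm]
  have e : (fun t : ℝ => NormedSpace.exp ((c * (t : ℂ)) • H)) =
      (fun z : ℂ => NormedSpace.exp (z • (c • H))) ∘ Complex.ofReal := by
    funext t; simp [Function.comp, he]
  rw [e, ← he]
  exact h3


noncomputable def trCLM (d : ℕ) : Matrix (Fin d) (Fin d) ℂ →L[ℝ] ℂ :=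
  LinearMap.toContinuousLinearMap ((Matrix.traceLinearMap (Fin d) ℂ ℂ).restrictScalars ℝ)

@[simp] lemma trCLM_apply (A : Matrix (Fin d) (Fin d) ℂ) : trCLM d A = A.trace := rfl

lemma heis_commute (H : Matrix (Fin d) (Fin d) ℂ) (c : ℂ) :
    H * NormedSpace.exp (c • H) = NormedSpace.exp (c • H) * H :=
  ((Commute.refl H).smul_right c).exp_right

/-- key step: derivative of the Heisenberg expectation -/
lemma heis_step (H ρ M : Matrix (Fin d) (Fin d) ℂ) (τ : ℝ) :
    HasDerivAt (fun t : ℝ =>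
      (M * NormedSpace.exp ((-(Complex.I * (t : ℂ))) • H) * ρ *
        NormedSpace.exp ((Complex.I * (t : ℂ)) • H)).trace)
      (Complex.I *
        ((H * M - M * H) * NormedSpace.exp ((-(Complex.I * (τ : ℂ))) • H) * ρ *
          NormedSpace.exp ((Complex.I * (τ : ℂ)) • H)).trace) τ := by
  set E₁ : Matrix (Fin d) (Fin d) ℂ := NormedSpace.exp ((-(Complex.I * (τ : ℂ))) • H) with hE₁def
  set E₂ : Matrix (Fin d) (Fin d) ℂ := NormedSpace.exp ((Complex.I * (τ : ℂ)) • H) with hE₂def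
  have hneg : ∀ t : ℝ, (-(Complex.I * (t : ℂ))) = (-Complex.I) * (t : ℂ) := by intro t; ring
  have hE1 : HasDerivAt (fun t : ℝ => NormedSpace.exp ((-(Complex.I * (t : ℂ))) • H))
      (((-Complex.I) • H) * E₁) τ := by
    simp only [hneg, hE₁def]
    exact heis_hasDerivAt_exp H (-Complex.I) τ
  have hE2 : HasDerivAt (fun t : ℝ => NormedSpace.exp ((Complex.I * (t : ℂ)) • H))
      ((Complex.I • H) * E₂) τ := heis_hasDerivAt_exp H Complex.I τ
  have hu := ((hE1.const_mul M).mul_const ρ).mul hE2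
  have hT := (trCLM d).hasFDerivAt.comp_hasDerivAt τ hu
  simp only [Function.comp_def, trCLM_apply] at hT
  refine hT.congr_deriv (Eq.symm ?_)
  change _ = Matrix.trace (_ : Matrix (Fin d) (Fin d) ℂ)
  -- trace identity
  have h1 : H * E₁ = E₁ * H := heis_commute H _
  have h2 : H * E₂ = E₂ * H := heis_commute H _
  have e1 : M * (((-Complex.I) • H) * E₁) * ρ * E₂ = (-Complex.I) • (M * H * E₁ * ρ * E₂) := by
    simp [Matrix.smul_mul, Matrix.mul_smul, mul_assoc]
  have e2 : M * E₁ * ρ * ((Complex.I • H) * E₂) = Complex.I • (M * E₁ * ρ * (H * E₂)) := by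
    simp [Matrix.smul_mul, Matrix.mul_smul]
  have e3 : (M * E₁ * ρ * (H * E₂)).trace = (H * (M * E₁ * ρ * E₂)).trace := by
    rw [h2, ← mul_assoc, Matrix.trace_mul_comm]
  have e4 : (H * M - M * H) * E₁ * ρ * E₂ = H * (M * E₁ * ρ * E₂) - M * H * E₁ * ρ * E₂ := by
    simp only [Matrix.sub_mul, mul_assoc]
  have hmul : M * (((-Complex.I) • H) * E₁) * ρ * E₂ + M * E₁ * ρ * ((Complex.I • H) * E₂)
      = (M * (((-Complex.I) • H) * E₁ ) * ρ) * E₂ + (M * E₁ * ρ) * ((Complex.I • H) * E₂) := by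
    simp [mul_assoc]
  rw [e4, Matrix.trace_sub]
  rw [show (M * (((-Complex.I) • H) * E₁) * ρ) * E₂ + (M * E₁ * ρ) * ((Complex.I • H) * E₂)
      = (-Complex.I) • (M * H * E₁ * ρ * E₂) + Complex.I • (M * E₁ * ρ * (H * E₂)) from by
    rw [← e1, ← e2]]
  rw [Matrix.trace_add, Matrix.trace_smul, Matrix.trace_smul, e3]
  simp only [smul_eq_mul]
  ring

end Helpers

/-- the derivative formula
d^k/dt^k Tr[B e^{−itH} ρ e^{itH}]|_{t=τ} = i^k Tr[C_k^H(B) e^{−iτH} ρ e^{iτH}],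
where C_k^H is the k-fold iterated commutator with H. -/
theorem iteratedDeriv_heisenberg_expectation
    (d : ℕ) (hd : 0 < d) (H B ρ : Matrix (Fin d) (Fin d) ℂ)
    (hH : H.IsHermitian)
    (f : ℝ → ℂ)
    (hf : ∀ t : ℝ, f t =
      (B * NormedSpace.exp ((-(Complex.I * (t : ℂ))) • H) * ρ *
        NormedSpace.exp ((Complex.I * (t : ℂ)) • H)).trace)
    (k : ℕ) (τ : ℝ) :
    iteratedDeriv k f τ =
      Complex.I ^ k *
        (((fun X => H * X - X * H)^[k] B) *
            NormedSpace.exp ((-(Complex.I * (τ : ℂ))) • H) * ρ *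
            NormedSpace.exp ((Complex.I * (τ : ℂ)) • H)).trace := by
  induction k generalizing τ with
  | zero => simpa using hf τ
  | succ k ih =>
    rw [iteratedDeriv_succ]
    have hfn : iteratedDeriv k f = fun s : ℝ =>
        Complex.I ^ k *
          (((fun X => H * X - X * H)^[k] B) *
              NormedSpace.exp ((-(Complex.I * (s : ℂ))) • H) * ρ *
              NormedSpace.exp ((Complex.I * (s : ℂ)) • H)).trace :=
      funext fun s => ih s
    rw [hfn]
    have hd' := (heis_step H ρ ((fun X => H * X - X * H)^[k] B) τ).const_mul (Complex.I ^ k)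
    rw [hd'.deriv, Function.iterate_succ_apply']
    ring
end

section
/- Let n be a positive integer, I = (Fin n → Fin 2), and γ : (Fin n → Fin 4) → ℝ. Then for all A B : Fin n → Fin 4: ((2^n : ℂ))⁻¹ * Tr ((P A) * (∑ C, (γ C : ℂ) • ((P C) * (P B) * (P C)))) = if A = B then ((∑ C in {C | (P C) * (P B) = (P B) * (P C)}, γ C) − (∑ C in {C | ¬((P C) * (P B) = (P B) * (P C))}, γ C) : ℂ) else 0. -/
open Matrix BigOperators

noncomputable def psign (c b : Fin 4) : ℂ := if c = 0 ∨ b = 0 ∨ c = b then 1 else -1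

lemma psign_mul_self (c b : Fin 4) : psign c b * psign c b = 1 := by
  unfold psign; split <;> norm_num

lemma pauli_mul_comm (c b : Fin 4) :
    pauli c * pauli b = psign c b • (pauli b * pauli c) := by
  fin_cases c <;> fin_cases b <;>
    · ext i j
      fin_cases i <;> fin_cases j <;>
        simp [pauli, psign, Matrix.mul_apply, Fin.sum_univ_two, Complex.I_mul_I]

lemma pauli_sq (c : Fin 4) : pauli c * pauli c = 1 := by
  fin_cases c <;>
    · ext i j
      fin_cases i <;> fin_cases j <;>
        simp [pauli, Matrix.mul_apply, Fin.sum_univ_two, Matrix.one_apply, Complex.I_mul_I]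

lemma pauli_trace_mul (a b : Fin 4) :
    (pauli a * pauli b).trace = if a = b then 2 else 0 := by
  fin_cases a <;> fin_cases b <;>
    simp [pauli, Matrix.trace, Matrix.mul_apply, Fin.sum_univ_two, Matrix.diag,
      Complex.I_mul_I] <;> norm_num

section Tens

noncomputable def tens {ι : Type*} [Fintype ι] (M : ι → Matrix (Fin 2) (Fin 2) ℂ) :
    Matrix (ι → Fin 2) (ι → Fin 2) ℂ :=
  Matrix.of fun x y => ∏ i, M i (x i) (y i)

variable {ι : Type*} [Fintype ι] [DecidableEq ι]

lemma tens_mul (M N : ι → Matrix (Fin 2) (Fin 2) ℂ) :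
    tens M * tens N = tens (fun i => M i * N i) := by
  ext x y
  simp only [tens, Matrix.mul_apply, Matrix.of_apply]
  rw [Finset.prod_univ_sum, Fintype.piFinset_univ]
  exact Finset.sum_congr rfl fun k _ => (Finset.prod_mul_distrib).symm

omit [DecidableEq ι] in
lemma tens_one : tens (fun _ : ι => (1 : Matrix (Fin 2) (Fin 2) ℂ)) = 1 := by
  ext x y
  simp only [tens, Matrix.of_apply, Matrix.one_apply]
  by_cases h : x = y
  · subst h; simp
  · obtain ⟨i, hi⟩ := Function.ne_iff.mp h
    rw [if_neg h]
    exact Finset.prod_eq_zero (Finset.mem_univ i) (by simp [Matrix.one_apply, hi])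

omit [DecidableEq ι] in
lemma tens_smul (c : ι → ℂ) (M : ι → Matrix (Fin 2) (Fin 2) ℂ) :
    tens (fun i => c i • M i) = (∏ i, c i) • tens M := by
  ext x y
  simp [tens, Finset.prod_mul_distrib]

lemma trace_tens (M : ι → Matrix (Fin 2) (Fin 2) ℂ) :
    (tens M).trace = ∏ i, (M i).trace := by
  simp only [Matrix.trace, Matrix.diag, tens, Matrix.of_apply]
  rw [Finset.prod_univ_sum, Fintype.piFinset_univ]

lemma pauliString_eq_tens (A : ι → Fin 4) :
    pauliString A = tens (fun i => pauli (A i)) := rfl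

lemma pauliString_sq (C : ι → Fin 4) : pauliString C * pauliString C = 1 := by
  rw [pauliString_eq_tens, tens_mul]
  simp only [pauli_sq]
  exact tens_one

lemma pauliString_mul_comm (C B : ι → Fin 4) :
    pauliString C * pauliString B
      = (∏ i, psign (C i) (B i)) • (pauliString B * pauliString C) := by
  have hf : (fun i => pauli (C i) * pauli (B i))
      = fun i => psign (C i) (B i) • (pauli (B i) * pauli (C i)) :=
    funext fun i => pauli_mul_comm (C i) (B i)
  rw [pauliString_eq_tens C, pauliString_eq_tens B, tens_mul, tens_mul, hf, tens_smul]

lemma pauliString_conj_s16 (C B : ι → Fin 4) :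
    pauliString C * pauliString B * pauliString C
      = (∏ i, psign (C i) (B i)) • pauliString B := by
  rw [pauliString_mul_comm C B, smul_mul_assoc, mul_assoc, pauliString_sq, mul_one]

lemma pauliString_trace_mul (A B : ι → Fin 4) :
    (pauliString A * pauliString B).trace
      = if A = B then (2 : ℂ) ^ Fintype.card ι else 0 := by
  rw [pauliString_eq_tens A, pauliString_eq_tens B, tens_mul, trace_tens]
  simp only [pauli_trace_mul]
  by_cases h : A = B
  · subst h; simp
  · obtain ⟨i, hi⟩ := Function.ne_iff.mp h
    rw [if_neg h]
    exact Finset.prod_eq_zero (Finset.mem_univ i) (by simp [hi])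

lemma prod_psign_eq_one_or (C B : ι → Fin 4) :
    (∏ i, psign (C i) (B i)) = 1 ∨ (∏ i, psign (C i) (B i)) = -1 := by
  rw [← mul_self_eq_one_iff, ← Finset.prod_mul_distrib]
  simp [psign_mul_self]

lemma pauliString_commute_iff (C B : ι → Fin 4) :
    pauliString C * pauliString B = pauliString B * pauliString C
      ↔ (∏ i, psign (C i) (B i)) = 1 := by
  constructor
  · intro h
    rcases prod_psign_eq_one_or C B with h1 | h1
    · exact h1
    · exfalso
      rw [pauliString_mul_comm C B, h1, neg_one_smul] at h
      have hX : pauliString B * pauliString C = 0 := by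
        have := eq_neg_iff_add_eq_zero.mp h.symm
        have h2 : (2 : ℂ) • (pauliString B * pauliString C) = 0 := by
          rw [two_smul]; exact this
        simpa using h2
      have hinv : (pauliString B * pauliString C) * (pauliString C * pauliString B)
          = (1 : Matrix (ι → Fin 2) (ι → Fin 2) ℂ) := by
        rw [mul_assoc, ← mul_assoc (pauliString C), pauliString_sq, one_mul,
          pauliString_sq]
      rw [hX, zero_mul] at hinv
      exact zero_ne_one hinv
  · intro h
    rw [pauliString_mul_comm C B, h, one_smul]

end Tens

open Classical in
/-- the Pauli transfer matrix of the Pauli channel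
N(X) = ∑_C γ_C σ_C X σ_C is diagonal, with diagonal entry the sum of γ_C over C
commuting with σ_B minus the sum over C anticommuting with σ_B. -/
theorem pauli_channel_ptm_diagonal
    (n : ℕ) (hn : 0 < n) (γ : (Fin n → Fin 4) → ℝ) (A B : Fin n → Fin 4) :
    ((2 : ℂ) ^ n)⁻¹ *
        (pauliString A *
          (∑ C, (γ C : ℂ) • (pauliString C * pauliString B * pauliString C))).trace
      = if A = B then
          ((∑ C ∈ Finset.univ.filter
              (fun C : Fin n → Fin 4 =>
                pauliString C * pauliString B = pauliString B * pauliString C),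
              (γ C : ℂ)) -
            ∑ C ∈ Finset.univ.filter
              (fun C : Fin n → Fin 4 =>
                ¬ pauliString C * pauliString B = pauliString B * pauliString C),
              (γ C : ℂ))
        else 0 := by
  set ε : (Fin n → Fin 4) → ℂ := fun C => ∏ i, psign (C i) (B i) with hε
  have key : (pauliString A *
      (∑ C, (γ C : ℂ) • (pauliString C * pauliString B * pauliString C))).trace
      = (∑ C, (γ C : ℂ) * ε C) * (pauliString A * pauliString B).trace := by
    rw [Finset.mul_sum, Matrix.trace_sum, Finset.sum_mul]
    refine Finset.sum_congr rfl fun C _ => ?_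
    rw [pauliString_conj_s16]
    simp only [Matrix.mul_smul, Matrix.trace_smul, smul_smul, smul_eq_mul, hε]
  rw [key, pauliString_trace_mul]
  simp only [Fintype.card_fin]
  by_cases h : A = B
  · rw [if_pos h, if_pos h]
    rw [mul_comm, mul_assoc, mul_inv_cancel₀ (pow_ne_zero _ two_ne_zero), mul_one]
    have hsplit := Finset.sum_filter_add_sum_filter_not Finset.univ
      (fun C : Fin n → Fin 4 =>
        pauliString C * pauliString B = pauliString B * pauliString C)
      (fun C => (γ C : ℂ) * ε C)
    have h1 : ∑ C ∈ Finset.univ.filter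
        (fun C : Fin n → Fin 4 =>
          pauliString C * pauliString B = pauliString B * pauliString C),
        (γ C : ℂ) * ε C
        = ∑ C ∈ Finset.univ.filter
        (fun C : Fin n → Fin 4 =>
          pauliString C * pauliString B = pauliString B * pauliString C),
        (γ C : ℂ) := by
      refine Finset.sum_congr rfl fun C hC => ?_
      rw [Finset.mem_filter] at hC
      rw [show ε C = 1 from (pauliString_commute_iff C B).mp hC.2, mul_one]
    have h2 : ∑ C ∈ Finset.univ.filter
        (fun C : Fin n → Fin 4 =>
          ¬ pauliString C * pauliString B = pauliString B * pauliString C),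
        (γ C : ℂ) * ε C
        = ∑ C ∈ Finset.univ.filter
        (fun C : Fin n → Fin 4 =>
          ¬ pauliString C * pauliString B = pauliString B * pauliString C),
        (-(γ C : ℂ)) := by
      refine Finset.sum_congr rfl fun C hC => ?_
      rw [Finset.mem_filter] at hC
      have hc : ε C = -1 := by
        rcases prod_psign_eq_one_or C B with h1 | h1
        · exact absurd ((pauliString_commute_iff C B).mpr h1) hC.2
        · exact h1
      rw [hc]; ring
    rw [← hsplit, h1, h2, Finset.sum_neg_distrib, ← sub_eq_add_neg]
  · rw [if_neg h, if_neg h, mul_zero, mul_zero]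
end

section
/- Let n be a positive integer, I = (Fin n → Fin 2), and let A B : Fin n → Fin 4 with B ≠ (fun _ => 0). Define Γ : Matrix (I × I) (I × I) ℂ by Γ = ((2^(2n) : ℂ))⁻¹ • (1 + (P A) ⊗ₖ (P B)), and define N : Matrix I I ℂ → Matrix I I ℂ by N X = (2^n : ℂ) • ptr₁ ((Xᵀ ⊗ₖ 1) * Γ). Then for every X : Matrix I I ℂ: N X = ((2^n : ℂ))⁻¹ • ((Tr X) • 1 + ((−1)^(card {i | A i = 2}) * Tr (X * P A)) • (P B)). -/
open Matrix BigOperators Kronecker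

/-- Partial trace over the first tensor factor. -/
noncomputable def ptr1 {s t : Type*} [Fintype s] (M : Matrix (s × t) (s × t) ℂ) :
    Matrix t t ℂ :=
  Matrix.of fun k l => ∑ i, M (i, k) (i, l)


lemma pauli_transpose (a : Fin 4) :
    (pauli a)ᵀ = (if a = 2 then (-1 : ℂ) else 1) • pauli a := by
  fin_cases a <;>
    · ext i j
      fin_cases i <;> fin_cases j <;>
        simp [pauli, Matrix.one_apply]

lemma pauliString_transpose {ι : Type*} [Fintype ι] [DecidableEq ι] (A : ι → Fin 4) :
    (pauliString A)ᵀ =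
      ((-1 : ℂ) ^ (Finset.univ.filter (fun i => A i = 2)).card) • pauliString A := by
  ext x y
  simp only [Matrix.transpose_apply, pauliString, Matrix.of_apply, Matrix.smul_apply,
    smul_eq_mul]
  have h : ∀ i : ι, pauli (A i) (y i) (x i) =
      (if A i = 2 then (-1 : ℂ) else 1) * pauli (A i) (x i) (y i) := by
    intro i
    have := congrArg (fun M => M (x i) (y i)) (pauli_transpose (A i))
    simpa [Matrix.transpose_apply] using this
  rw [Finset.prod_congr rfl (fun i _ => h i), Finset.prod_mul_distrib]
  congr 1
  rw [Finset.prod_ite, Finset.prod_const, Finset.prod_const]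
  simp

lemma ptr1_kron {s t : Type*} [Fintype s] [Fintype t]
    (M : Matrix s s ℂ) (K : Matrix t t ℂ) :
    ptr1 (M ⊗ₖ K) = M.trace • K := by
  ext k l
  simp [ptr1, Matrix.trace, Matrix.kroneckerMap_apply, Finset.sum_mul, Matrix.diag]

lemma ptr1_smul {s t : Type*} [Fintype s] (c : ℂ) (M : Matrix (s × t) (s × t) ℂ) :
    ptr1 (c • M) = c • ptr1 M := by
  ext k l
  simp [ptr1, Finset.mul_sum]

lemma ptr1_add {s t : Type*} [Fintype s] (M K : Matrix (s × t) (s × t) ℂ) :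
    ptr1 (M + K) = ptr1 M + ptr1 K := by
  ext k l
  simp [ptr1, Finset.sum_add_distrib]

/-- the quantum channel with Choi state (1 + σ_A ⊗ σ_B)/2^{2n}, recovered
via the Choi inversion formula N(X) = 2ⁿ ptr₁((Xᵀ ⊗ 1)·Γ), acts as
N(X) = ((Tr X)·1 + (−1)^{#{i | A i = 2}} Tr(X σ_A) · σ_B)/2ⁿ. -/
theorem sparse_choi_channel_action
    (n : ℕ) (hn : 0 < n) (A B : Fin n → Fin 4) (hB : B ≠ fun _ => (0 : Fin 4))
    (Γ : Matrix ((Fin n → Fin 2) × (Fin n → Fin 2))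
      ((Fin n → Fin 2) × (Fin n → Fin 2)) ℂ)
    (hΓ : Γ = ((2 : ℂ) ^ (2 * n))⁻¹ • (1 + pauliString A ⊗ₖ pauliString B))
    (N : Matrix (Fin n → Fin 2) (Fin n → Fin 2) ℂ →
      Matrix (Fin n → Fin 2) (Fin n → Fin 2) ℂ)
    (hN : ∀ X, N X = (2 : ℂ) ^ n •
      ptr1 ((Xᵀ ⊗ₖ (1 : Matrix (Fin n → Fin 2) (Fin n → Fin 2) ℂ)) * Γ))
    (X : Matrix (Fin n → Fin 2) (Fin n → Fin 2) ℂ) :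
    N X = ((2 : ℂ) ^ n)⁻¹ •
      (X.trace • 1 +
        (((-1 : ℂ)) ^ (Finset.univ.filter (fun i => A i = 2)).card *
            (X * pauliString A).trace) • pauliString B) := by
  rw [hN, hΓ]
  have hpow : (2 : ℂ) ^ (2 * n) = (2 : ℂ) ^ n * (2 : ℂ) ^ n := by
    rw [two_mul, pow_add]
  have h2 : ((2 : ℂ) ^ n) ≠ 0 := pow_ne_zero _ two_ne_zero
  have hone : ((Xᵀ ⊗ₖ (1 : Matrix (Fin n → Fin 2) (Fin n → Fin 2) ℂ)) *
      (pauliString A ⊗ₖ pauliString B)) = (Xᵀ * pauliString A) ⊗ₖ pauliString B := by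
    rw [← Matrix.mul_kronecker_mul, Matrix.one_mul]
  have htr : (Xᵀ * pauliString A).trace =
      (-1 : ℂ) ^ (Finset.univ.filter (fun i => A i = 2)).card *
        (X * pauliString A).trace := by
    have : (Xᵀ * pauliString A).trace = ((Xᵀ * pauliString A)ᵀ).trace :=
      (Matrix.trace_transpose _).symm
    rw [this, Matrix.transpose_mul, Matrix.transpose_transpose, pauliString_transpose,
      Matrix.smul_mul, Matrix.trace_smul, Matrix.trace_mul_comm]
    simp [smul_eq_mul]
  rw [Matrix.mul_smul, mul_add, Matrix.mul_one, hone, ptr1_smul, ptr1_add, ptr1_kron,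
    ptr1_kron, Matrix.trace_transpose, htr]
  rw [smul_smul, hpow, mul_inv, ← mul_assoc, mul_inv_cancel₀ h2, one_mul]
end
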